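/- arXiv:1111.5412 — 5 statements merged into one kernel-verified Lean document; each statement's English description precedes it below -/
import Mathlib

section
/- Let n ≥ 3 and x ≥ 1 be integers, and let G be the graph consisting of a disjoint union of x cycles of order n. Then OCN(G) = n(n-2)x(x-1). -/
/-!
Lower bound. Fix a vertex `b` and a cycle `C` not containing it, and call `u ∈ C` splitting if the
line `bu` has vertices of `C` strictly on both sides. Walking around `C` from `u`, the side then
changes along some edge, which the line `bu` crosses. At most two vertices of `C` are not
splitting: if `u ≠ v` both had the rest of `C` on their left, `v` would be left of `bu` and `u` left
of `bv`, against the antisymmetry of orientation. This gives `n - 2` crossings for each of the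
`n x` vertices `b` and `x - 1` cycles `C`, all distinct since the crossed edge tells which of `b`,
`u` lies on `C`.

Upper bound. Put the vertices on the parabola `y = t²`, cycle after cycle and in order along each
cycle. The line through two points of the parabola meets a chord iff exactly one of them lies
strictly between its endpoints, so an edge between consecutive positions is never crossed, and the
closing edge of a cycle is crossed exactly by the lines joining one of its `n - 2` inner vertices
to one of the `(x - 1) n` vertices of the other cycles.
-/

noncomputable section

/-- A rectilinear drawing of a finite simple graph `G`: an injective map of the
vertices to points of the plane `ℝ × ℝ` in general position (no three collinear);
each edge is drawn as the straight-line segment between the images of its endpoints. -/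
structure OrchardDrawing {V : Type*} (G : SimpleGraph V) where
  pos : V → ℝ × ℝ
  inj : Function.Injective pos
  genPos : ∀ u v w : V, u ≠ v → u ≠ w → v ≠ w →
    ¬ Collinear ℝ ({pos u, pos v, pos w} : Set (ℝ × ℝ))

/-- The number of Orchard crossings of a drawing: the number of pairs
`(e, e')` where `e = {s,t}` is an edge of `G` and `e' = {u,v}` is an unordered pair of
distinct vertices with `{u,v} ≠ {s,t}` such that the straight line through the images of
`u` and `v` meets the open segment joining the images of `s` and `t`.
This equals `Σ_{(s,t) ∈ E} c(s,t)`. -/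
def orchardCrossings {V : Type*} {G : SimpleGraph V} (D : OrchardDrawing G) : ℕ :=
  Nat.card {q : Sym2 V × Sym2 V //
    q.1 ∈ G.edgeSet ∧ q.2 ≠ q.1 ∧ ¬ q.2.IsDiag ∧
    ∃ u v s t : V, q.2 = s(u, v) ∧ q.1 = s(s, t) ∧
      ∃ p ∈ openSegment ℝ (D.pos s) (D.pos t),
        Collinear ℝ ({D.pos u, D.pos v, p} : Set (ℝ × ℝ))}

/-- The Orchard crossing number of a finite simple graph: the minimum of the number of
Orchard crossings over all rectilinear drawings. -/
def OCN {V : Type*} [Fintype V] (G : SimpleGraph V) : ℕ :=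
  sInf {m : ℕ | ∃ D : OrchardDrawing G, orchardCrossings D = m}

/-- The disjoint union of `x` cycles of order `n` (for `n ≥ 3`): vertices `(i, a)` for
`i : Fin x`, `a : Fin n`; two vertices are adjacent iff they lie in the same cycle and
are consecutive (mod `n`) in it. -/
def disjointCycles (x n : ℕ) : SimpleGraph (Fin x × Fin n) :=
  SimpleGraph.fromRel (fun u v => u.1 = v.1 ∧ ((u.2 : ℕ) + 1) % n = (v.2 : ℕ))

namespace Orchard

-- `cross (V - U) (X - U)` is positive, zero or negative according as `X` lies to the left of,
-- on, or to the right of the line from `U` to `V`.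
def cross (w z : ℝ × ℝ) : ℝ := w.1 * z.2 - w.2 * z.1

theorem cross_comm (w z : ℝ × ℝ) : cross w z = -cross z w := by
  simp only [cross]; ring

theorem exists_eq_smul_of_cross_eq_zero {w z : ℝ × ℝ} (hw : w ≠ 0) (h : cross w z = 0) :
    ∃ t : ℝ, z = t • w := by
  simp only [cross] at h
  rcases ne_or_eq w.1 0 with h1 | h1
  · refine ⟨z.1 / w.1, Prod.ext ?_ ?_⟩
    · simp [h1]
    · simp only [Prod.smul_snd, smul_eq_mul]
      field_simp
      linarith
  · have h2 : w.2 ≠ 0 := fun h2 => hw (Prod.ext h1 h2)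
    refine ⟨z.2 / w.2, Prod.ext ?_ ?_⟩
    · simp only [h1, zero_mul, zero_sub, neg_eq_zero, mul_eq_zero, h2, false_or] at h
      simp [h, h1]
    · simp [h2]

theorem collinear_iff_cross_eq_zero {P Q R : ℝ × ℝ} :
    Collinear ℝ ({P, Q, R} : Set (ℝ × ℝ)) ↔ cross (Q - P) (R - P) = 0 := by
  rw [collinear_iff_of_mem (Set.mem_insert P {Q, R})]
  constructor
  · rintro ⟨v, hv⟩
    obtain ⟨a, rfl⟩ := hv Q (by simp)
    obtain ⟨b, rfl⟩ := hv R (by simp)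
    simp only [cross, vadd_eq_add, add_sub_cancel_right, Prod.smul_fst, Prod.smul_snd,
      smul_eq_mul]
    ring
  · intro h
    rcases eq_or_ne (Q - P) 0 with hQ | hQ
    · refine ⟨R - P, ?_⟩
      simp only [Set.mem_insert_iff, Set.mem_singleton_iff, forall_eq_or_imp, forall_eq]
      exact ⟨⟨0, by simp⟩, ⟨0, by simpa [sub_eq_zero] using hQ⟩, ⟨1, by simp⟩⟩
    · obtain ⟨t, ht⟩ := exists_eq_smul_of_cross_eq_zero hQ h
      refine ⟨Q - P, ?_⟩
      simp only [Set.mem_insert_iff, Set.mem_singleton_iff, forall_eq_or_imp, forall_eq]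
      exact ⟨⟨0, by simp⟩, ⟨1, by simp⟩, ⟨t, by rw [← ht, vadd_eq_add, sub_add_cancel]⟩⟩

theorem cross_convexCombination_sub (w S T B : ℝ × ℝ) {a b : ℝ} (hab : a + b = 1) :
    cross w (a • S + b • T - B) = a * cross w (S - B) + b * cross w (T - B) := by
  obtain rfl : b = 1 - a := by linarith
  simp only [cross, Prod.fst_sub, Prod.snd_sub, Prod.fst_add, Prod.snd_add, Prod.smul_fst,
    Prod.smul_snd, smul_eq_mul]
  ring

theorem exists_pos_add_eq_zero_iff {f g : ℝ} :
    (∃ a b : ℝ, 0 < a ∧ 0 < b ∧ a + b = 1 ∧ a * f + b * g = 0) ↔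
      f * g < 0 ∨ (f = 0 ∧ g = 0) := by
  constructor
  · rintro ⟨a, b, ha, hb, -, h⟩
    by_contra! hfg
    obtain ⟨hfg, hfg0⟩ := hfg
    rcases lt_trichotomy f 0 with hf | hf | hf <;> rcases lt_trichotomy g 0 with hg | hg | hg
    all_goals first | exact hfg0 hf hg | nlinarith
  · rintro (h | ⟨rfl, rfl⟩)
    · have hfg : f - g ≠ 0 := by
        rcases mul_neg_iff.mp h with ⟨hf, hg⟩ | ⟨hf, hg⟩ <;> linarith
      refine ⟨-g / (f - g), f / (f - g), ?_, ?_, by field_simp; ring, by field_simp; ring⟩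
        <;> rcases mul_neg_iff.mp h with ⟨hf, hg⟩ | ⟨hf, hg⟩
      all_goals first
        | exact div_pos (by linarith) (by linarith)
        | exact div_pos_of_neg_of_neg (by linarith) (by linarith)
    · exact ⟨1 / 2, 1 / 2, by norm_num, by norm_num, by norm_num, by ring⟩

theorem exists_mem_openSegment_collinear_iff {U V S T : ℝ × ℝ} :
    (∃ p ∈ openSegment ℝ S T, Collinear ℝ ({U, V, p} : Set (ℝ × ℝ))) ↔
      cross (V - U) (S - U) * cross (V - U) (T - U) < 0 ∨
        (cross (V - U) (S - U) = 0 ∧ cross (V - U) (T - U) = 0) := by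
  rw [← exists_pos_add_eq_zero_iff]
  constructor
  · rintro ⟨-, ⟨a, b, ha, hb, hab, rfl⟩, hcol⟩
    rw [collinear_iff_cross_eq_zero, cross_convexCombination_sub _ _ _ _ hab] at hcol
    exact ⟨a, b, ha, hb, hab, hcol⟩
  · rintro ⟨a, b, ha, hb, hab, h⟩
    refine ⟨a • S + b • T, ⟨a, b, ha, hb, hab, rfl⟩, ?_⟩
    rw [collinear_iff_cross_eq_zero, cross_convexCombination_sub _ _ _ _ hab, h]

end Orchard

open Finset

namespace OrchardDrawing

variable {V : Type*} {G : SimpleGraph V}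

def side (D : OrchardDrawing G) (u v w : V) : ℝ :=
  Orchard.cross (D.pos v - D.pos u) (D.pos w - D.pos u)

theorem side_swap (D : OrchardDrawing G) (u v w : V) : D.side u v w = -D.side u w v :=
  Orchard.cross_comm _ _

theorem side_eq_zero_iff (D : OrchardDrawing G) {u v w : V} (huv : u ≠ v) :
    D.side u v w = 0 ↔ w = u ∨ w = v := by
  constructor
  · intro h
    by_contra! hw
    exact D.genPos u v w huv (Ne.symm hw.1) (Ne.symm hw.2)
      (Orchard.collinear_iff_cross_eq_zero.mpr h)
  · rintro (rfl | rfl)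
    · simp [side, Orchard.cross]
    · simp only [side, Orchard.cross]
      ring

theorem crosses_iff (D : OrchardDrawing G) {u v s t : V} (huv : u ≠ v) (hst : s ≠ t)
    (hne : s(u, v) ≠ s(s, t)) :
    (∃ p ∈ openSegment ℝ (D.pos s) (D.pos t),
        Collinear ℝ ({D.pos u, D.pos v, p} : Set (ℝ × ℝ))) ↔
      D.side u v s * D.side u v t < 0 := by
  refine Orchard.exists_mem_openSegment_collinear_iff.trans (or_iff_left ?_)
  rintro ⟨hs, ht⟩
  rcases (D.side_eq_zero_iff huv).mp hs with rfl | rfl <;>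
    rcases (D.side_eq_zero_iff huv).mp ht with rfl | rfl
  exacts [hst rfl, hne rfl, hne Sym2.eq_swap, hst rfl]

-- `orchardCrossings D` is `Nat.card {q // D.IsCrossing q}` by definition.
def IsCrossing (D : OrchardDrawing G) (q : Sym2 V × Sym2 V) : Prop :=
  q.1 ∈ G.edgeSet ∧ q.2 ≠ q.1 ∧ ¬ q.2.IsDiag ∧
    ∃ u v s t : V, q.2 = s(u, v) ∧ q.1 = s(s, t) ∧
      ∃ p ∈ openSegment ℝ (D.pos s) (D.pos t),
        Collinear ℝ ({D.pos u, D.pos v, p} : Set (ℝ × ℝ))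

def parabola (G : SimpleGraph V) (ℓ : V → ℝ) (hℓ : Function.Injective ℓ) :
    OrchardDrawing G where
  pos v := (ℓ v, ℓ v ^ 2)
  inj u v h := hℓ (congrArg Prod.fst h)
  genPos u v w huv huw hvw hcol := by
    rw [Orchard.collinear_iff_cross_eq_zero] at hcol
    simp only [Orchard.cross, Prod.fst_sub, Prod.snd_sub] at hcol
    have : (ℓ v - ℓ u) * (ℓ w - ℓ u) * (ℓ w - ℓ v) = 0 := by linear_combination hcol
    simp only [mul_eq_zero, sub_eq_zero, hℓ.eq_iff] at this
    tauto

theorem parabola_side (ℓ : V → ℝ) (hℓ : Function.Injective ℓ) (u v w : V) :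
    (parabola G ℓ hℓ).side u v w = (ℓ v - ℓ u) * (ℓ w - ℓ u) * (ℓ w - ℓ v) := by
  simp only [side, parabola, Orchard.cross, Prod.fst_sub, Prod.snd_sub]
  ring

theorem parabola_crosses_iff (ℓ : V → ℝ) (hℓ : Function.Injective ℓ) {u v s t : V}
    (huv : u ≠ v) (hst : s ≠ t) (hne : s(u, v) ≠ s(s, t)) :
    (∃ p ∈ openSegment ℝ ((parabola G ℓ hℓ).pos s) ((parabola G ℓ hℓ).pos t),
        Collinear ℝ ({(parabola G ℓ hℓ).pos u, (parabola G ℓ hℓ).pos v, p} : Set (ℝ × ℝ))) ↔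
      (ℓ s - ℓ u) * (ℓ s - ℓ v) * ((ℓ t - ℓ u) * (ℓ t - ℓ v)) < 0 := by
  have hsq : 0 < (ℓ v - ℓ u) ^ 2 := by
    have := sub_ne_zero.mpr (hℓ.ne huv.symm)
    positivity
  rw [crosses_iff _ huv hst hne, parabola_side, parabola_side,
    show ∀ a b c d e : ℝ, a * b * c * (a * d * e) = a ^ 2 * (b * c * (d * e)) by intros; ring]
  exact ⟨fun h => neg_of_mul_neg_right h hsq.le, mul_neg_of_pos_of_neg hsq⟩

end OrchardDrawing

theorem Int.between_of_mul_neg {a b σ τ : ℤ} (hτσ : τ < σ)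
    (h : (σ - a) * (σ - b) * ((τ - a) * (τ - b)) < 0) :
    (τ < a ∧ a < σ ∧ (b < τ ∨ σ < b)) ∨ (τ < b ∧ b < σ ∧ (a < τ ∨ σ < a)) := by
  rcases mul_neg_iff.mp h with ⟨h1, h2⟩ | ⟨h1, h2⟩
  · rcases mul_pos_iff.mp h1 with ⟨h3, h4⟩ | ⟨h3, h4⟩ <;>
      rcases mul_neg_iff.mp h2 with ⟨h5, h6⟩ | ⟨h5, h6⟩ <;> omega
  · rcases mul_neg_iff.mp h1 with ⟨h3, h4⟩ | ⟨h3, h4⟩ <;>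
      rcases mul_pos_iff.mp h2 with ⟨h5, h6⟩ | ⟨h5, h6⟩ <;> omega

theorem Finset.card_le_two_of_antisymm {α : Type*} (f : α → α → ℝ) (hf : ∀ a b, f a b = -f b a)
    {s : Finset α}
    (hs : ∀ a ∈ s, (∀ b ∈ s, b ≠ a → 0 < f a b) ∨ ∀ b ∈ s, b ≠ a → f a b < 0) :
    #s ≤ 2 := by
  by_contra! h
  obtain ⟨a, ha, b, hb, c, hc, hab, hac, hbc⟩ := two_lt_card.mp h
  rcases hs a ha with Ha | Ha <;> rcases hs b hb with Hb | Hb <;> rcases hs c hc with Hc | Hc <;>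
  · have := Ha b hb hab.symm
    have := Ha c hc hac.symm
    have := Hb a ha hab
    have := Hb c hc hbc.symm
    have := Hc a ha hac
    have := Hc b hb hbc
    linarith [hf a b, hf a c, hf b c]

theorem Finset.card_filter_univ_prod {α β : Type*} [Fintype α] [Fintype β] (p : α × β → Prop)
    [DecidablePred p] : #{x | p x} = ∑ a, #{b | p (a, b)} := by
  simp only [card_filter, Fintype.sum_prod_type]

theorem Nat.exists_mul_succ_neg {g : ℕ → ℝ} {a b : ℕ} (hab : a ≤ b)
    (hg : ∀ k ∈ Set.Icc a b, g k ≠ 0) (h : g a * g b < 0) :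
    ∃ k ∈ Set.Ico a b, g k * g (k + 1) < 0 := by
  induction b, hab using Nat.le_induction with
  | base => nlinarith [mul_self_nonneg (g a)]
  | succ b hab ih =>
    by_cases hb : g a * g b < 0
    · obtain ⟨k, hk, hk'⟩ := ih (fun k hk => hg k ⟨hk.1, hk.2.trans b.le_succ⟩) hb
      exact ⟨k, ⟨hk.1, hk.2.trans b.lt_succ_self⟩, hk'⟩
    · refine ⟨b, ⟨hab, b.lt_succ_self⟩, ?_⟩
      have hpos : 0 < g a * g b := lt_of_le_of_ne (not_lt.mp hb)
        (mul_ne_zero (hg a ⟨le_rfl, hab.trans b.le_succ⟩) (hg b ⟨hab, b.le_succ⟩)).symm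
      have hsq : 0 < g b ^ 2 :=
        lt_of_le_of_ne (sq_nonneg _) (pow_ne_zero 2 (hg b ⟨hab, b.le_succ⟩)).symm
      have : g a * g b * (g b * g (b + 1)) < 0 := by
        rw [show g a * g b * (g b * g (b + 1)) = g b ^ 2 * (g a * g (b + 1)) by ring]
        exact mul_neg_of_pos_of_neg hsq h
      exact neg_of_mul_neg_right this hpos.le

namespace disjointCycles

variable {x n : ℕ}

theorem adj_iff {s t : Fin x × Fin n} :
    (disjointCycles x n).Adj s t ↔ s ≠ t ∧
      ((s.1 = t.1 ∧ ((s.2 : ℕ) + 1) % n = t.2) ∨ (t.1 = s.1 ∧ ((t.2 : ℕ) + 1) % n = s.2)) :=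
  SimpleGraph.fromRel_adj _ _ _

theorem adj_add_one [NeZero n] (i : Fin x) {c : Fin n} (hc : c + 1 ≠ c) :
    (disjointCycles x n).Adj (i, c) (i, c + 1) := by
  refine adj_iff.mpr ⟨fun h => hc (congrArg Prod.snd h).symm, Or.inl ⟨rfl, ?_⟩⟩
  simp [Fin.val_add, Nat.add_mod_mod]

def label (v : Fin x × Fin n) : ℕ := finProdFinEquiv v

theorem label_injective : Function.Injective (label (x := x) (n := n)) :=
  Fin.val_injective.comp finProdFinEquiv.injective

theorem label_apply (v : Fin x × Fin n) : label v = v.2 + n * v.1 := rfl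

theorem fst_eq_of_label_mem {v : Fin x × Fin n} {i : ℕ} (h₁ : n * i ≤ label v)
    (h₂ : label v < n * i + n) : (v.1 : ℕ) = i := by
  have : label v / n = v.1 := by simp [label, Nat.add_mul_div_left _ _ (Fin.pos v.2)]
  rw [← this, Nat.div_eq_of_lt_le (by rwa [mul_comm]) (by rwa [add_mul, one_mul, mul_comm])]

theorem fst_eq_and_mem_Ioo_of_label [NeZero n] {v : Fin x × Fin n} {i : ℕ}
    (h₁ : n * i < label v) (h₂ : label v < n * i + (n - 1)) :
    (v.1 : ℕ) = i ∧ v.2 ∈ Ioo 0 ⊤ := by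
  have hv := fst_eq_of_label_mem h₁.le (by omega)
  rw [label_apply, hv] at h₁ h₂
  simp only [mem_Ioo, Fin.lt_def, Fin.val_top, Fin.val_zero]
  omega

theorem fst_ne_of_label_notMem {v : Fin x × Fin n} {i : ℕ}
    (h : label v < n * i ∨ n * i + (n - 1) < label v) : (v.1 : ℕ) ≠ i := by
  intro hv
  rw [label_apply, hv] at h
  have := v.2.isLt
  omega

def parabolaDrawing (x n : ℕ) : OrchardDrawing (disjointCycles x n) :=
  OrchardDrawing.parabola _ (fun v => (label v : ℝ)) (Nat.cast_injective.comp label_injective)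

theorem exists_eq_of_parabola_crossing [NeZero n] {s t u v : Fin x × Fin n} (hst : s ≠ t)
    (hfst : s.1 = t.1) (hsnd : ((s.2 : ℕ) + 1) % n = t.2)
    (h : ((label s : ℤ) - label u) * ((label s : ℤ) - label v) *
      (((label t : ℤ) - label u) * ((label t : ℤ) - label v)) < 0) :
    ∃ i j : Fin x, ∃ a b : Fin n, i ≠ j ∧ a ∈ Ioo 0 ⊤ ∧
      s(s, t) = s((i, 0), (i, ⊤)) ∧ s(u, v) = s((i, a), (j, b)) := by
  obtain ⟨i, c⟩ := s
  obtain ⟨i', d⟩ := t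
  dsimp only at hfst hsnd
  obtain rfl : i = i' := hfst
  have hcd : (c : ℕ) ≠ d := fun h => hst (by rw [Fin.ext h])
  have hc : label (i, c) = c + n * i := rfl
  have hd : label (i, d) = d + n * i := rfl
  have := c.isLt
  by_cases hlt : (c : ℕ) + 1 < n
  · -- the labels of `s` and `t` are consecutive, so no label lies strictly between them
    rw [Nat.mod_eq_of_lt hlt] at hsnd
    rw [mul_comm] at h
    have := Int.between_of_mul_neg (by omega) h
    omega
  have hc' : (c : ℕ) = n - 1 := by omega
  have hd' : (d : ℕ) = 0 := by rwa [show (c : ℕ) + 1 = n by omega, Nat.mod_self, eq_comm] at hsnd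
  have key : ∀ u v : Fin x × Fin n, n * i < label u → label u < n * i + (n - 1) →
      (label v < n * i ∨ n * i + (n - 1) < label v) →
      ∃ j : Fin x, ∃ a b : Fin n, i ≠ j ∧ a ∈ Ioo 0 ⊤ ∧ s(u, v) = s((i, a), (j, b)) := by
    intro u v h₁ h₂ h₃
    obtain ⟨hu, ha⟩ := fst_eq_and_mem_Ioo_of_label h₁ h₂
    exact ⟨v.1, u.2, v.2, fun hv => fst_ne_of_label_notMem h₃ (by rw [← hv]), ha,
      by rw [← Fin.ext hu]⟩
  rw [show ((i, c) : Fin x × Fin n) = (i, ⊤) by ext <;> simp [hc', Fin.val_top],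
    show ((i, d) : Fin x × Fin n) = (i, 0) by ext <;> simp [hd'], Sym2.eq_swap]
  rcases Int.between_of_mul_neg (by omega) h with ⟨h₁, h₂, h₃⟩ | ⟨h₁, h₂, h₃⟩
  · obtain ⟨j, a, b, hij, ha, huv⟩ := key u v (by omega) (by omega) (by omega)
    exact ⟨i, j, a, b, hij, ha, rfl, huv⟩
  · obtain ⟨j, a, b, hij, ha, huv⟩ := key v u (by omega) (by omega) (by omega)
    exact ⟨i, j, a, b, hij, ha, rfl, Sym2.eq_swap.trans huv⟩

theorem orchardCrossings_parabolaDrawing_le [NeZero n] :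
    orchardCrossings (parabolaDrawing x n) ≤ x * (x - 1) * ((n - 2) * n) := by
  classical
  let f : (Fin x × Fin x) × (Fin n × Fin n) → Sym2 (Fin x × Fin n) × Sym2 (Fin x × Fin n) :=
    fun p => (s((p.1.1, 0), (p.1.1, ⊤)), s((p.1.1, p.2.1), (p.1.2, p.2.2)))
  let M := (univ : Finset (Fin x)).offDiag ×ˢ (Ioo (0 : Fin n) ⊤ ×ˢ (univ : Finset (Fin n)))
  have hsub : {q | (parabolaDrawing x n).IsCrossing q} ⊆ M.image f := by
    rintro ⟨e, q⟩ ⟨hedge, hne, hdiag, u, v, s, t, rfl, rfl, hcross⟩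
    have huv : u ≠ v := fun h => hdiag (Sym2.mk_isDiag_iff.mpr h)
    obtain ⟨hst, hsucc⟩ := adj_iff.mp hedge
    rw [parabolaDrawing, OrchardDrawing.parabola_crosses_iff _ _ huv hst hne] at hcross
    have hZ : ((label s : ℤ) - label u) * ((label s : ℤ) - label v) *
        (((label t : ℤ) - label u) * ((label t : ℤ) - label v)) < 0 := by exact_mod_cast hcross
    obtain ⟨i, j, a, b, hij, ha, hst', huv'⟩ : ∃ i j : Fin x, ∃ a b : Fin n, i ≠ j ∧ a ∈ Ioo 0 ⊤ ∧
        s(s, t) = s((i, 0), (i, ⊤)) ∧ s(u, v) = s((i, a), (j, b)) := by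
      rcases hsucc with ⟨hfst, hsnd⟩ | ⟨hfst, hsnd⟩
      · exact exists_eq_of_parabola_crossing hst hfst hsnd hZ
      · rw [mul_comm] at hZ
        rw [Sym2.eq_swap]
        exact exists_eq_of_parabola_crossing hst.symm hfst hsnd hZ
    simp only [coe_image, Set.mem_image, mem_coe]
    exact ⟨((i, j), (a, b)), by simp [M, hij, ha], by simp [f, hst', huv']⟩
  calc orchardCrossings (parabolaDrawing x n)
      = Set.ncard {q | (parabolaDrawing x n).IsCrossing q} := Nat.card_coe_set_eq _
    _ ≤ #(M.image f) := by
      rw [← Set.ncard_coe_finset]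
      exact Set.ncard_le_ncard hsub
    _ ≤ #M := card_image_le
    _ = x * (x - 1) * ((n - 2) * n) := by
      simp [M, offDiag_card, Fin.card_Ioo, Fin.val_top, Nat.mul_sub_one]
      omega

def SplitsCycle (D : OrchardDrawing (disjointCycles x n)) (b u : Fin x × Fin n) : Prop :=
  ∃ v w : Fin n, 0 < D.side b u (u.1, v) ∧ D.side b u (u.1, w) < 0

open scoped Classical in
theorem card_not_splitsCycle_le_two (D : OrchardDrawing (disjointCycles x n))
    {b : Fin x × Fin n} {i : Fin x} (hi : b.1 ≠ i) :
    #{a : Fin n | ¬ SplitsCycle D b (i, a)} ≤ 2 := by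
  refine card_le_two_of_antisymm (fun a c => D.side b (i, a) (i, c))
    (fun a c => D.side_swap b (i, a) (i, c)) fun a ha => ?_
  have hne : ∀ c, c ≠ a → D.side b (i, a) (i, c) ≠ 0 := by
    intro c hca h0
    rcases (D.side_eq_zero_iff fun h => hi (congrArg Prod.fst h)).mp h0 with h | h
    · exact hi (congrArg Prod.fst h).symm
    · exact hca (congrArg Prod.snd h)
  simp only [mem_filter, mem_univ, true_and, SplitsCycle, not_exists, not_and, not_lt] at ha
  by_cases hpos : ∃ c, 0 < D.side b (i, a) (i, c)
  · obtain ⟨c, hc⟩ := hpos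
    exact Or.inl fun d _ hda => lt_of_le_of_ne (ha c d hc) (hne d hda).symm
  · push Not at hpos
    exact Or.inr fun d _ hda => lt_of_le_of_ne (hpos d) (hne d hda)

open scoped Classical in
theorem le_card_splitsCycle (D : OrchardDrawing (disjointCycles x n)) (b : Fin x × Fin n) :
    (x - 1) * (n - 2) ≤ #{u : Fin x × Fin n | b.1 ≠ u.1 ∧ SplitsCycle D b u} := by
  rw [card_filter_univ_prod]
  calc (x - 1) * (n - 2) = ∑ _i ∈ univ.erase b.1, (n - 2) := by simp
    _ ≤ ∑ i ∈ univ.erase b.1, #{a : Fin n | b.1 ≠ i ∧ SplitsCycle D b (i, a)} := by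
      refine sum_le_sum fun i hi => ?_
      have hi := ne_of_mem_erase hi
      have := card_not_splitsCycle_le_two D hi.symm
      have := card_filter_add_card_filter_not (s := univ) (p := fun a => SplitsCycle D b (i, a))
      simp only [Ne, hi.symm, not_false_eq_true, true_and, card_univ, Fintype.card_fin] at this ⊢
      omega
    _ ≤ _ := sum_le_sum_of_subset (erase_subset _ _)

open Fin.NatCast in
theorem exists_side_mul_neg [NeZero n] (D : OrchardDrawing (disjointCycles x n))
    {b u : Fin x × Fin n} (hbu : b.1 ≠ u.1) (h : SplitsCycle D b u) :
    ∃ c : Fin n, D.side b u (u.1, c) * D.side b u (u.1, c + 1) < 0 := by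
  obtain ⟨v, w, hv, hw⟩ := h
  have hb : b ≠ u := fun h => hbu (congrArg Prod.fst h)
  -- `g d` is the side of the line `bu` on which the vertex `d` steps after `u` on its cycle lies.
  let g : ℕ → ℝ := fun d => D.side b u (u.1, u.2 + d)
  have hg : ∀ c : Fin n, g (c - u.2 : Fin n) = D.side b u (u.1, c) := by simp [g]
  have hg0 : ∀ d ∈ Set.Icc 1 (n - 1), g d ≠ 0 := by
    intro d hd h0
    rcases (D.side_eq_zero_iff hb).mp h0 with h | h
    · exact hbu (congrArg Prod.fst h).symm
    · have : (d : Fin n) = 0 := by simpa using congrArg Prod.snd h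
      rw [Fin.natCast_eq_zero] at this
      exact Nat.not_dvd_of_pos_of_lt (by grind) (by grind) this
  have hmem : ∀ c : Fin n, D.side b u (u.1, c) ≠ 0 →
      ((c - u.2 : Fin n) : ℕ) ∈ Set.Icc 1 (n - 1) := by
    intro c hc
    refine ⟨Nat.one_le_iff_ne_zero.mpr fun h0 => hc ?_, Nat.le_sub_one_of_lt (Fin.is_lt _)⟩
    rw [Fin.val_eq_zero_iff, sub_eq_zero] at h0
    exact (D.side_eq_zero_iff hb).mpr (Or.inr (by rw [h0]))
  have hv' := hmem v hv.ne'
  have hw' := hmem w hw.ne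
  rw [← hg] at hv hw
  obtain ⟨k, hk⟩ : ∃ k : ℕ, g k * g (k + 1) < 0 := by
    rcases le_total ((v - u.2 : Fin n) : ℕ) (w - u.2 : Fin n) with hvw | hwv
    · obtain ⟨k, -, hk'⟩ := Nat.exists_mul_succ_neg hvw
        (fun k hk => hg0 k ⟨hv'.1.trans hk.1, hk.2.trans hw'.2⟩) (mul_neg_of_pos_of_neg hv hw)
      exact ⟨k, hk'⟩
    · obtain ⟨k, -, hk'⟩ := Nat.exists_mul_succ_neg hwv
        (fun k hk => hg0 k ⟨hw'.1.trans hk.1, hk.2.trans hv'.2⟩) (mul_neg_of_neg_of_pos hw hv)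
      exact ⟨k, hk'⟩
  refine ⟨u.2 + k, ?_⟩
  simpa [g, Nat.cast_succ, add_assoc] using hk

theorem exists_isCrossing_of_splitsCycle [NeZero n] (D : OrchardDrawing (disjointCycles x n))
    {b u : Fin x × Fin n} (hbu : b.1 ≠ u.1) (h : SplitsCycle D b u) :
    ∃ e : Sym2 (Fin x × Fin n), (∀ w ∈ e, w.1 = u.1) ∧ D.IsCrossing (e, s(b, u)) := by
  obtain ⟨c, hc⟩ := exists_side_mul_neg D hbu h
  have hc1 : c + 1 ≠ c := fun h => by
    rw [h] at hc
    exact (mul_self_nonneg _).not_gt hc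
  refine ⟨s((u.1, c), (u.1, c + 1)),
    fun w hw => by rcases Sym2.mem_iff.mp hw with rfl | rfl <;> rfl, adj_add_one u.1 hc1, fun he => ?_,
    fun hd => hbu (congrArg Prod.fst (Sym2.mk_isDiag_iff.mp hd)), b, u, _, _, rfl, rfl,
    Orchard.exists_mem_openSegment_collinear_iff.mpr (Or.inl hc)⟩
  have : b ∈ s((u.1, c), (u.1, c + 1)) := by
    rw [← show s(b, u) = s((u.1, c), (u.1, c + 1)) from he]
    exact Sym2.mem_mk_left b u
  rcases Sym2.mem_iff.mp this with rfl | rfl <;> exact hbu rfl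

theorem le_orchardCrossings [NeZero n] (D : OrchardDrawing (disjointCycles x n)) :
    x * n * ((x - 1) * (n - 2)) ≤ orchardCrossings D := by
  classical
  let P := {p : (Fin x × Fin n) × (Fin x × Fin n) // p.1.1 ≠ p.2.1 ∧ SplitsCycle D p.1 p.2}
  choose e he using fun p : P => exists_isCrossing_of_splitsCycle D p.2.1 p.2.2
  let F : P → {q // D.IsCrossing q} := fun p => ⟨(e p, s(p.1.1, p.1.2)), (he p).2⟩
  have hF : Function.Injective F := by
    rintro ⟨⟨b, u⟩, hp⟩ ⟨⟨b', u'⟩, hp'⟩ h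
    have he_eq : e ⟨(b, u), hp⟩ = e ⟨(b', u'), hp'⟩ := congrArg (fun q => q.1.1) h
    rcases Sym2.eq_iff.mp (congrArg (fun q => q.1.2) h) with ⟨rfl, rfl⟩ | ⟨rfl, rfl⟩
    · rfl
    · have hw := (he ⟨(b, u), hp⟩).1 _ (Sym2.out_fst_mem _)
      rw [he_eq, (he ⟨(u, b), hp'⟩).1 _ (Sym2.out_fst_mem _)] at hw
      exact (hp.1 hw).elim
  calc x * n * ((x - 1) * (n - 2)) = ∑ _b : Fin x × Fin n, (x - 1) * (n - 2) := by simp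
    _ ≤ ∑ b, #{u | b.1 ≠ u.1 ∧ SplitsCycle D b u} := sum_le_sum fun b _ => le_card_splitsCycle D b
    _ = Nat.card P := by rw [Nat.card_eq_fintype_card, Fintype.card_subtype, card_filter_univ_prod]
    _ ≤ orchardCrossings D := Nat.card_le_card_of_injective F hF

end disjointCycles

theorem OCN_disjointCycles_general (n x : ℕ) (hn : 3 ≤ n) :
    OCN (disjointCycles x n) = n * (n - 2) * x * (x - 1) := by
  have : NeZero n := ⟨by omega⟩
  let P := disjointCycles.parabolaDrawing x n
  apply le_antisymm
  · calc OCN (disjointCycles x n) ≤ orchardCrossings P := Nat.sInf_le ⟨P, rfl⟩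
      _ ≤ x * (x - 1) * ((n - 2) * n) := disjointCycles.orchardCrossings_parabolaDrawing_le
      _ = n * (n - 2) * x * (x - 1) := by ring
  · refine le_csInf ⟨_, P, rfl⟩ ?_
    rintro _ ⟨D, rfl⟩
    calc n * (n - 2) * x * (x - 1) = x * n * ((x - 1) * (n - 2)) := by ring
      _ ≤ orchardCrossings D := disjointCycles.le_orchardCrossings D

theorem OCN_disjointCycles (n x : ℕ) (hn : 3 ≤ n) (hx : 1 ≤ x) :
    OCN (disjointCycles x n) = n * (n - 2) * x * (x - 1) :=
  OCN_disjointCycles_general n x hn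
end
end

section
/- For the 3-prism graph P₃, one has OCN(P₃) ≤ 10. -/
noncomputable section

/-- The `n`-prism graph (for `n ≥ 3`): vertices `(i, k)` with `i : Fin n`, `k : Fin 2`;
edges are the two cycles `(i, k)–(i+1 mod n, k)` (for `k = 0, 1`) together with the rungs
`(i, 0)–(i, 1)`. -/
def prismGraph (n : ℕ) : SimpleGraph (Fin n × Fin 2) :=
  SimpleGraph.fromRel (fun u v =>
    (u.2 = v.2 ∧ ((u.1 : ℕ) + 1) % n = (v.1 : ℕ)) ∨ (u.1 = v.1 ∧ u.2 = 0 ∧ v.2 = 1))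

/-! ### Auxiliary machinery -/

/-- signed cross product test -/
def rcross (a b c : ℝ × ℝ) : ℝ :=
  (b.1 - a.1) * (c.2 - a.2) - (b.2 - a.2) * (c.1 - a.1)

lemma collinear_iff_rcross (a b c : ℝ × ℝ) :
    Collinear ℝ ({a, b, c} : Set (ℝ × ℝ)) ↔ rcross a b c = 0 := by
  constructor
  · intro h
    rw [collinear_iff_of_mem (Set.mem_insert a _)] at h
    obtain ⟨v, hv⟩ := h
    obtain ⟨r₁, hb⟩ := hv b (by simp)
    obtain ⟨r₂, hc⟩ := hv c (by simp)
    subst hb hc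
    simp [rcross, Prod.smul_def, smul_eq_mul]
    ring
  · intro h
    by_cases hba : b = a
    · subst hba
      have : ({b, b, c} : Set (ℝ × ℝ)) = {b, c} := by
        simp
      rw [this]
      exact collinear_pair ℝ b c
    · rw [collinear_iff_of_mem (Set.mem_insert a _)]
      refine ⟨b - a, ?_⟩
      intro p hp
      rcases hp with rfl | rfl | rfl
      · exact ⟨0, by simp⟩
      · exact ⟨1, by simp⟩
      · have hne : b.1 - a.1 ≠ 0 ∨ b.2 - a.2 ≠ 0 := by
          by_contra hcon
          push_neg at hcon
          apply hba
          have h1 := hcon.1; have h2 := hcon.2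
          ext <;> [linarith; linarith]
        unfold rcross at h
        rcases hne with h1 | h2
        · refine ⟨(p.1 - a.1) / (b.1 - a.1), ?_⟩
          have heq : ((p.1 - a.1) / (b.1 - a.1)) • (b - a) = p - a := by
            ext
            · simp only [Prod.smul_fst, Prod.fst_sub, smul_eq_mul]; field_simp
            · simp only [Prod.smul_snd, Prod.snd_sub, smul_eq_mul]
              field_simp
              nlinarith [h]
          rw [heq]; simp
        · refine ⟨(p.2 - a.2) / (b.2 - a.2), ?_⟩
          have heq : ((p.2 - a.2) / (b.2 - a.2)) • (b - a) = p - a := by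
            ext
            · simp only [Prod.smul_fst, Prod.fst_sub, smul_eq_mul]
              field_simp
              nlinarith [h]
            · simp only [Prod.smul_snd, Prod.snd_sub, smul_eq_mul]; field_simp
          rw [heq]; simp

lemma rcross_comb (a b s t : ℝ × ℝ) (θ : ℝ) :
    rcross a b ((1 - θ) • s + θ • t) = (1 - θ) * rcross a b s + θ * rcross a b t := by
  simp only [rcross, Prod.smul_fst, Prod.smul_snd, Prod.fst_add, Prod.snd_add, smul_eq_mul]
  ring

lemma seg_rcross_zero {a b s t : ℝ × ℝ}
    (h : ∃ p ∈ openSegment ℝ s t, Collinear ℝ ({a, b, p} : Set (ℝ × ℝ))) :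
    ∃ θ : ℝ, 0 < θ ∧ θ < 1 ∧ (1 - θ) * rcross a b s + θ * rcross a b t = 0 := by
  obtain ⟨p, hp, hcz⟩ := h
  rw [collinear_iff_rcross] at hcz
  rw [openSegment_eq_image] at hp
  obtain ⟨θ, hθ, rfl⟩ := hp
  exact ⟨θ, hθ.1, hθ.2, by rw [← rcross_comb]; exact hcz⟩

lemma sep_iff (a b s t : ℝ × ℝ) (hs : rcross a b s ≠ 0) (ht : rcross a b t ≠ 0) :
    (∃ p ∈ openSegment ℝ s t, Collinear ℝ ({a, b, p} : Set (ℝ × ℝ))) ↔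
      rcross a b s * rcross a b t < 0 := by
  constructor
  · intro h
    obtain ⟨θ, h0, h1, heq⟩ := seg_rcross_zero h
    rcases lt_or_gt_of_ne hs with hX | hX <;> rcases lt_or_gt_of_ne ht with hY | hY <;>
      nlinarith
  · intro h
    set X := rcross a b s with hXdef
    set Y := rcross a b t with hYdef
    refine ⟨(1 - X / (X - Y)) • s + (X / (X - Y)) • t, ?_, ?_⟩
    · rw [openSegment_eq_image]
      refine ⟨X / (X - Y), ⟨?_, ?_⟩, rfl⟩
      · rcases lt_or_gt_of_ne hs with hX | hX
        · apply div_pos_of_neg_of_neg hX; nlinarith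
        · apply div_pos hX; nlinarith
      · rw [div_lt_one_iff]
        rcases lt_or_gt_of_ne hs with hX | hX
        · right; right; constructor <;> nlinarith
        · left; constructor <;> nlinarith
    · rw [collinear_iff_rcross, rcross_comb]
      have hXY : X - Y ≠ 0 := by
        rcases lt_or_gt_of_ne hs with hX | hX <;> intro hc <;> nlinarith
      field_simp
      ring

/-! ### The concrete drawing of the 3-prism -/

abbrev PV := Fin 3 × Fin 2

def ipos : PV → ℤ × ℤ := fun v =>
  match v.1.val, v.2.val with
  | 0, 0 => (6, 0)
  | 0, _ => (6, 4)
  | 1, 0 => (7, 0)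
  | 1, _ => (7, 3)
  | _, 0 => (0, 5)
  | _, _ => (4, 5)

def icross (a b c : ℤ × ℤ) : ℤ :=
  (b.1 - a.1) * (c.2 - a.2) - (b.2 - a.2) * (c.1 - a.1)

def rpos (v : PV) : ℝ × ℝ := (((ipos v).1 : ℝ), ((ipos v).2 : ℝ))

lemma rcross_cast (a b c : PV) :
    rcross (rpos a) (rpos b) (rpos c) = ((icross (ipos a) (ipos b) (ipos c) : ℤ) : ℝ) := by
  simp only [rcross, icross, rpos]
  push_cast
  ring

lemma key : ∀ a b c : PV, a ≠ b → a ≠ c → b ≠ c →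
    icross (ipos a) (ipos b) (ipos c) ≠ 0 := by decide

lemma ipos_inj : Function.Injective ipos := by decide

def D : OrchardDrawing (prismGraph 3) where
  pos := rpos
  inj := by
    intro a b h
    apply ipos_inj
    have h1 : ((ipos a).1 : ℝ) = ((ipos b).1 : ℝ) := congrArg Prod.fst h
    have h2 : ((ipos a).2 : ℝ) = ((ipos b).2 : ℝ) := congrArg Prod.snd h
    have h1' : (ipos a).1 = (ipos b).1 := by exact_mod_cast h1
    have h2' : (ipos a).2 = (ipos b).2 := by exact_mod_cast h2
    exact Prod.ext h1' h2'
  genPos := by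
    intro u v w hu hv hw
    rw [collinear_iff_rcross, rcross_cast]
    exact_mod_cast key u v w hu hv hw

def sepB (u v s t : PV) : Bool :=
  decide (icross (ipos u) (ipos v) (ipos s) * icross (ipos u) (ipos v) (ipos t) < 0)

lemma icross_swap (a b c : ℤ × ℤ) : icross b a c = - icross a b c := by
  simp only [icross]; ring

lemma icross_aba (a b : ℤ × ℤ) : icross a b a = 0 := by
  simp only [icross]; ring

lemma icross_abb (a b : ℤ × ℤ) : icross a b b = 0 := by
  simp only [icross]; ring

lemma sepB_swap₁ (u v s t : PV) : sepB u v s t = sepB v u s t := by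
  unfold sepB
  rw [icross_swap (ipos v) (ipos u), icross_swap (ipos v) (ipos u), neg_mul_neg]

lemma sepB_swap₂ (u v s t : PV) : sepB u v s t = sepB u v t s := by
  unfold sepB; rw [mul_comm]

def sep2 : Sym2 PV → Sym2 PV → Bool :=
  Sym2.lift ⟨fun u v => Sym2.lift ⟨fun s t => sepB u v s t, fun s t => sepB_swap₂ u v s t⟩,
    fun u v => by
      funext e
      refine Sym2.inductionOn e fun s t => ?_
      simp only [Sym2.lift_mk]
      exact sepB_swap₁ u v s t⟩

@[simp] lemma sep2_mk (u v s t : PV) : sep2 s(u, v) s(s, t) = sepB u v s t := by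
  simp [sep2]

instance prismAdjDec : DecidableRel (prismGraph 3).Adj := fun a b =>
  decidable_of_iff _ (SimpleGraph.fromRel_adj
    (fun u v : PV =>
      (u.2 = v.2 ∧ ((u.1 : ℕ) + 1) % 3 = (v.1 : ℕ)) ∨ (u.1 = v.1 ∧ u.2 = 0 ∧ v.2 = 1))
    a b).symm

/-- the degenerate cases: the line through `u v` never meets an open segment
with an endpoint on that line (by general position). -/
lemma seg_imp {a b s t : ℝ × ℝ}
    (h : ∃ p ∈ openSegment ℝ s t, Collinear ℝ ({a, b, p} : Set (ℝ × ℝ))) :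
    (rcross a b s = 0 → rcross a b t = 0) ∧ (rcross a b t = 0 → rcross a b s = 0) := by
  obtain ⟨θ, h0, h1, heq⟩ := seg_rcross_zero h
  constructor <;> intro hz <;> rw [hz] at heq
  · have hθ : θ ≠ 0 := ne_of_gt h0
    have : θ * rcross a b t = 0 := by linarith
    rcases mul_eq_zero.1 this with hc | hc
    · exact absurd hc hθ
    · exact hc
  · have hθ : (1 - θ) ≠ 0 := by intro hc; linarith
    have : (1 - θ) * rcross a b s = 0 := by linarith
    rcases mul_eq_zero.1 this with hc | hc
    · exact absurd hc hθ
    · exact hc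

lemma pointwise {u v s t : PV} (huv : u ≠ v) (hst : s ≠ t) (hne : s(u, v) ≠ s(s, t)) :
    ((∃ p ∈ openSegment ℝ (rpos s) (rpos t),
        Collinear ℝ ({rpos u, rpos v, p} : Set (ℝ × ℝ))) ↔ sepB u v s t = true) := by
  have hIC : ∀ a b c : PV, rcross (rpos a) (rpos b) (rpos c) =
      ((icross (ipos a) (ipos b) (ipos c) : ℤ) : ℝ) := rcross_cast
  rw [show (sepB u v s t = true) ↔
      icross (ipos u) (ipos v) (ipos s) * icross (ipos u) (ipos v) (ipos t) < 0 from
    decide_eq_true_iff]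
  by_cases hus : u = s
  · subst hus
    have hvt : v ≠ t := fun hc => hne (by rw [hc])
    constructor
    · intro h
      exfalso
      have h0 : rcross (rpos u) (rpos v) (rpos u) = 0 := by
        rw [hIC, icross_aba]; simp
      have := (seg_imp h).1 h0
      rw [hIC] at this
      exact key u v t huv hst hvt (by exact_mod_cast this)
    · intro h
      exfalso
      rw [icross_aba] at h
      simp at h
  · by_cases hut : u = t
    · subst hut
      have hvs : v ≠ s := fun hc => by
        apply hne; rw [hc]; exact Sym2.eq_swap
    -- u = t : rcross u v t = 0
      constructor
      · intro h
        exfalso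
        have h0 : rcross (rpos u) (rpos v) (rpos u) = 0 := by
          rw [hIC, icross_aba]; simp
        have := (seg_imp h).2 h0
        rw [hIC] at this
        exact key u v s huv hst.symm hvs (by exact_mod_cast this)
      · intro h
        exfalso
        rw [icross_aba] at h
        simp at h
    · by_cases hvs : v = s
      · subst hvs
        have hut' : u ≠ t := hut
        constructor
        · intro h
          exfalso
          have h0 : rcross (rpos u) (rpos v) (rpos v) = 0 := by
            rw [hIC, icross_abb]; simp
          have := (seg_imp h).1 h0
          rw [hIC] at this
          exact key u v t huv hut (hst) (by exact_mod_cast this)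
        · intro h
          exfalso
          rw [icross_abb] at h
          simp at h
      · by_cases hvt : v = t
        · subst hvt
          constructor
          · intro h
            exfalso
            have h0 : rcross (rpos u) (rpos v) (rpos v) = 0 := by
              rw [hIC, icross_abb]; simp
            have := (seg_imp h).2 h0
            rw [hIC] at this
            exact key u v s huv hus hvs (by exact_mod_cast this)
          · intro h
            exfalso
            rw [icross_abb] at h
            simp at h
        · -- all distinct
          have hX : rcross (rpos u) (rpos v) (rpos s) ≠ 0 := by
            rw [hIC]
            exact_mod_cast key u v s huv hus hvs
          have hY : rcross (rpos u) (rpos v) (rpos t) ≠ 0 := by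
            rw [hIC]
            exact_mod_cast key u v t huv hut hvt
          rw [sep_iff _ _ _ _ hX hY, hIC, hIC, ← Int.cast_mul]
          exact_mod_cast Iff.rfl

def Q (q : Sym2 PV × Sym2 PV) : Prop :=
  q.1 ∈ (prismGraph 3).edgeSet ∧ q.2 ≠ q.1 ∧ ¬ q.2.IsDiag ∧ sep2 q.2 q.1 = true

instance : DecidablePred Q := fun q => by unfold Q; infer_instance

lemma main_iff (q : Sym2 PV × Sym2 PV) :
    (q.1 ∈ (prismGraph 3).edgeSet ∧ q.2 ≠ q.1 ∧ ¬ q.2.IsDiag ∧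
      ∃ u v s t : PV, q.2 = s(u, v) ∧ q.1 = s(s, t) ∧
        ∃ p ∈ openSegment ℝ (D.pos s) (D.pos t),
          Collinear ℝ ({D.pos u, D.pos v, p} : Set (ℝ × ℝ))) ↔ Q q := by
  obtain ⟨e1, e2⟩ := q
  refine Sym2.inductionOn₂ e1 e2 fun s t u v => ?_
  unfold Q
  simp only []
  constructor
  · rintro ⟨hE, hne, hd, u', v', s', t', h2, h1, hg⟩
    refine ⟨hE, hne, hd, ?_⟩
    rw [h2, h1, sep2_mk]
    rw [h2] at hd hne
    rw [h1] at hE hne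
    have huv : u' ≠ v' := fun hc => hd (by rw [hc]; exact Sym2.mk_isDiag_iff.2 rfl)
    have hst : s' ≠ t' := ((SimpleGraph.mem_edgeSet _).1 hE).ne
    exact (pointwise huv hst hne).1 hg
  · rintro ⟨hE, hne, hd, hsep⟩
    have huv : u ≠ v := fun hc => hd (by rw [hc]; exact Sym2.mk_isDiag_iff.2 rfl)
    have hst : s ≠ t := ((SimpleGraph.mem_edgeSet _).1 hE).ne
    rw [sep2_mk] at hsep
    exact ⟨hE, hne, hd, u, v, s, t, rfl, rfl, (pointwise huv hst hne).2 hsep⟩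

lemma crossings_D : orchardCrossings D = 10 := by
  unfold orchardCrossings
  rw [Nat.card_congr (Equiv.subtypeEquivRight main_iff)]
  rw [Nat.card_eq_fintype_card]
  decide

theorem OCN_prism_three : OCN (prismGraph 3) ≤ 10 := by
  apply Nat.sInf_le
  exact ⟨D, crossings_D⟩
end
end

section
/- For the 4-prism graph P₄, one has OCN(P₄) ≤ 32. -/
noncomputable section

/-!
Place the eight vertices at explicit integer points in general position. A line through two
vertices meets the open segment of an edge exactly when it strictly separates the endpoints,
i.e. when two integer orientation determinants have opposite signs, so the Orchard crossings
of this drawing can be counted by evaluation: there are exactly 32.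
-/

def cross {R : Type*} [CommRing R] (a b c : R × R) : R :=
  (b.1 - a.1) * (c.2 - a.2) - (b.2 - a.2) * (c.1 - a.1)

lemma Int.cast_cross {R : Type*} [CommRing R] (a b c : ℤ × ℤ) :
    cross (Prod.map Int.cast Int.cast a) (Prod.map Int.cast Int.cast b)
      (Prod.map Int.cast Int.cast c) = ((cross a b c : ℤ) : R) := by
  simp only [cross, Prod.map_fst, Prod.map_snd]
  push_cast
  ring

lemma cross_add_smul {R : Type*} [CommRing R] (u v s t : R × R) {a b : R} (hab : a + b = 1) :
    cross u v (a • s + b • t) = a * cross u v s + b * cross u v t := by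
  obtain rfl : b = 1 - a := by rw [← hab]; ring
  simp only [cross, Prod.fst_add, Prod.snd_add, Prod.smul_fst, Prod.smul_snd, smul_eq_mul]
  ring

section

variable {K : Type*} [Field K]

lemma cross_eq_zero_of_collinear {a b c : K × K} (h : Collinear K ({a, b, c} : Set (K × K))) :
    cross a b c = 0 := by
  obtain ⟨p₀, v, hv⟩ := collinear_iff_exists_forall_eq_smul_vadd _ |>.1 h
  obtain ⟨ra, rfl⟩ := hv a (by simp)
  obtain ⟨rb, rfl⟩ := hv b (by simp)
  obtain ⟨rc, rfl⟩ := hv c (by simp)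
  simp only [cross, Prod.fst_add, Prod.snd_add, Prod.smul_fst, Prod.smul_snd, vadd_eq_add,
    smul_eq_mul]
  ring

variable [LinearOrder K] [IsStrictOrderedRing K]

lemma collinear_iff_cross_eq_zero {a b c : K × K} (hab : a ≠ b) :
    Collinear K ({a, b, c} : Set (K × K)) ↔ cross a b c = 0 := by
  refine ⟨cross_eq_zero_of_collinear, fun h => ?_⟩
  set d := b - a
  have hd : d.1 ^ 2 + d.2 ^ 2 ≠ 0 := by
    have : d ≠ 0 := sub_ne_zero.2 hab.symm
    contrapose! this
    ext <;> simp only [Prod.fst_zero, Prod.snd_zero] <;> nlinarith [sq_nonneg d.1, sq_nonneg d.2]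
  refine (collinear_iff_exists_forall_eq_smul_vadd _).2 ⟨a, d, ?_⟩
  rintro p (rfl | rfl | rfl)
  · exact ⟨0, by simp⟩
  · exact ⟨1, by simp [d]⟩
  -- `p - a` is its orthogonal projection onto `d`, since it has no component orthogonal to `d`
  refine ⟨((p.1 - a.1) * d.1 + (p.2 - a.2) * d.2) / (d.1 ^ 2 + d.2 ^ 2), ?_⟩
  simp only [cross, d, Prod.fst_sub, Prod.snd_sub] at h hd ⊢
  ext <;> simp only [vadd_eq_add, Prod.fst_add, Prod.snd_add, Prod.smul_fst, Prod.smul_snd,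
    smul_eq_mul, Prod.fst_sub, Prod.snd_sub] <;> field_simp
  · linear_combination (a.2 - b.2) * h
  · linear_combination (b.1 - a.1) * h

lemma cross_mul_cross_neg_or_of_mem_openSegment {u v s t p : K × K}
    (hp : p ∈ openSegment K s t) (hcol : Collinear K ({u, v, p} : Set (K × K))) :
    cross u v s * cross u v t < 0 ∨ cross u v s = 0 ∧ cross u v t = 0 := by
  obtain ⟨a, b, ha, hb, hab, rfl⟩ := hp
  have h := cross_eq_zero_of_collinear hcol
  rw [cross_add_smul u v s t hab] at h
  by_cases ht : cross u v t = 0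
  · rw [ht, mul_zero, add_zero] at h
    exact .inr ⟨(mul_eq_zero.1 h).resolve_left ha.ne', ht⟩
  · left
    have : a * (cross u v s * cross u v t) = -(b * cross u v t ^ 2) := by
      linear_combination cross u v t * h
    have : 0 < b * cross u v t ^ 2 := by positivity
    nlinarith

end

namespace OrchardDrawing

variable {V : Type*} {G : SimpleGraph V}

lemma cross_ne_zero (D : OrchardDrawing G) {u v w : V} (huv : u ≠ v) (huw : u ≠ w)
    (hvw : v ≠ w) : cross (D.pos u) (D.pos v) (D.pos w) ≠ 0 := fun h =>
  D.genPos u v w huv huw hvw ((collinear_iff_cross_eq_zero (D.inj.ne huv)).2 h)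

lemma eq_or_eq_of_cross_eq_zero (D : OrchardDrawing G) {u v w : V} (huv : u ≠ v)
    (h : cross (D.pos u) (D.pos v) (D.pos w) = 0) : w = u ∨ w = v := by
  by_contra! hw
  exact D.cross_ne_zero huv hw.1.symm hw.2.symm h

/-- In general position an Orchard crossing of an edge `s t` by a line `u v` is a strict
separation of `s` from `t`. -/
lemma orchardCrossings_le_card (D : OrchardDrawing G) (S : Finset (Sym2 V × Sym2 V))
    (hS : ∀ s t u v, G.Adj s t → s(u, v) ≠ s(s, t) →
      cross (D.pos u) (D.pos v) (D.pos s) * cross (D.pos u) (D.pos v) (D.pos t) < 0 →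
      (s(s, t), s(u, v)) ∈ S) :
    orchardCrossings D ≤ S.card := by
  rw [← Nat.card_eq_finsetCard]
  refine Nat.card_mono S.finite_toSet ?_
  rintro ⟨_, _⟩ ⟨hst, hne, huv, u, v, s, t, rfl, rfl, p, hp, hcol⟩
  rcases cross_mul_cross_neg_or_of_mem_openSegment hp hcol with hsep | ⟨hs, ht⟩
  · exact hS s t u v hst hne hsep
  · have huv : u ≠ v := fun h => huv (Sym2.mk_isDiag_iff.2 h)
    refine absurd ((Sym2.mem_and_mem_iff (G.ne_of_adj hst)).1 ⟨?_, ?_⟩) hne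
    · exact Sym2.mem_iff.2 (D.eq_or_eq_of_cross_eq_zero huv hs)
    · exact Sym2.mem_iff.2 (D.eq_or_eq_of_cross_eq_zero huv ht)

def ofIntPoints (f : V → ℤ × ℤ) (hf : Function.Injective f)
    (hgen : ∀ u v w, u ≠ v → u ≠ w → v ≠ w → cross (f u) (f v) (f w) ≠ 0) :
    OrchardDrawing G where
  pos v := Prod.map Int.cast Int.cast (f v)
  inj := (Prod.map_injective.2 ⟨Int.cast_injective, Int.cast_injective⟩).comp hf
  genPos u v w huv huw hvw hcol := hgen u v w huv huw hvw <| by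
    have := cross_eq_zero_of_collinear hcol
    rwa [Int.cast_cross, Int.cast_eq_zero] at this

variable [Fintype V] [DecidableEq V] [DecidableRel G.Adj]

variable (G) in
def separatedPairs (f : V → ℤ × ℤ) : Finset (Sym2 V × Sym2 V) :=
  ((Finset.univ : Finset ((V × V) × (V × V))).filter fun ⟨⟨s, t⟩, ⟨u, v⟩⟩ =>
      G.Adj s t ∧ s(u, v) ≠ s(s, t) ∧ cross (f u) (f v) (f s) * cross (f u) (f v) (f t) < 0).image
    fun ⟨⟨s, t⟩, ⟨u, v⟩⟩ => (s(s, t), s(u, v))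

lemma orchardCrossings_ofIntPoints_le (f : V → ℤ × ℤ) (hf : Function.Injective f)
    (hgen : ∀ u v w, u ≠ v → u ≠ w → v ≠ w → cross (f u) (f v) (f w) ≠ 0) :
    orchardCrossings (ofIntPoints (G := G) f hf hgen) ≤ (separatedPairs G f).card := by
  refine orchardCrossings_le_card _ _ fun s t u v hst hne hsep => Finset.mem_image.2
    ⟨((s, t), (u, v)), Finset.mem_filter.2 ⟨Finset.mem_univ _, hst, hne, ?_⟩, rfl⟩
  simp only [ofIntPoints, Int.cast_cross] at hsep
  exact_mod_cast hsep

end OrchardDrawing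

instance (n : ℕ) : DecidableRel (prismGraph n).Adj :=
  inferInstanceAs (DecidableRel (SimpleGraph.fromRel _).Adj)

def prismFourPoints (p : Fin 4 × Fin 2) : ℤ × ℤ :=
  ![![(-1, -4), (-4, 3)], ![(1, 5), (-1, 5)], ![(3, 4), (4, 2)], ![(3, -3), (4, 1)]] p.1 p.2

lemma prismFourPoints_injective : Function.Injective prismFourPoints := by decide

lemma prismFourPoints_cross_ne_zero : ∀ u v w, u ≠ v → u ≠ w → v ≠ w →
    cross (prismFourPoints u) (prismFourPoints v) (prismFourPoints w) ≠ 0 := by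
  decide

set_option maxRecDepth 100000 in
lemma card_separatedPairs_prismFourPoints :
    (OrchardDrawing.separatedPairs (prismGraph 4) prismFourPoints).card = 32 := by
  decide

theorem OCN_prism_four : OCN (prismGraph 4) ≤ 32 :=
  calc OCN (prismGraph 4)
      ≤ orchardCrossings (.ofIntPoints prismFourPoints prismFourPoints_injective
          prismFourPoints_cross_ne_zero : OrchardDrawing (prismGraph 4)) := Nat.sInf_le ⟨_, rfl⟩
    _ ≤ (OrchardDrawing.separatedPairs (prismGraph 4) prismFourPoints).card :=
        OrchardDrawing.orchardCrossings_ofIntPoints_le _ _ _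
    _ = 32 := card_separatedPairs_prismFourPoints
end
end

section
/- Let n > 4 be an odd integer. Then OCN(P_n) ≤ 4n(n-2) + 2, where P_n is the n-prism graph. -/
noncomputable section

/-! ### Auxiliary definitions and lemmas for the upper bound -/

/-- The position index of a vertex of the prism: the vertices are placed on the parabola
`y = x²` at abscissae `σ(i,k) = 2i + ((i+k) mod 2)`. -/
def sig (n : ℕ) (v : Fin n × Fin 2) : ℕ := 2 * v.1.val + (v.1.val + v.2.val) % 2

lemma sig_lt {n : ℕ} (v : Fin n × Fin 2) : sig n v < 2 * n := by
  have := v.1.isLt; have := v.2.isLt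
  unfold sig; omega

lemma sig_inj {n : ℕ} : Function.Injective (sig n) := by
  rintro ⟨i, k⟩ ⟨j, l⟩ h
  have hi := i.isLt; have hj := j.isLt
  have hk := k.isLt; have hl := l.isLt
  unfold sig at h
  dsimp only at h
  simp only [Prod.mk.injEq]
  constructor
  · exact Fin.ext (by omega)
  · exact Fin.ext (by omega)

/-- The drawing: vertex `v` is placed at `(σ v, (σ v)²)` on the parabola. -/
def dpos (n : ℕ) (v : Fin n × Fin 2) : ℝ × ℝ := ((sig n v : ℝ), (sig n v : ℝ) ^ 2)

lemma parab_not_collinear {x y z : ℝ} (hxy : x ≠ y) (hxz : x ≠ z) (hyz : y ≠ z) :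
    ¬ Collinear ℝ ({(x, x ^ 2), (y, y ^ 2), (z, z ^ 2)} : Set (ℝ × ℝ)) := by
  intro h
  rw [collinear_iff_exists_forall_eq_smul_vadd] at h
  obtain ⟨p₀, v, hv⟩ := h
  obtain ⟨r1, h1⟩ := hv (x, x ^ 2) (by simp)
  obtain ⟨r2, h2⟩ := hv (y, y ^ 2) (by simp)
  obtain ⟨r3, h3⟩ := hv (z, z ^ 2) (by simp)
  rw [Prod.ext_iff] at h1 h2 h3
  simp only [Prod.smul_fst, Prod.smul_snd, Prod.fst_add, Prod.snd_add, smul_eq_mul,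
    Prod.fst_vadd, Prod.snd_vadd, vadd_eq_add] at h1 h2 h3
  obtain ⟨e1, f1⟩ := h1
  obtain ⟨e2, f2⟩ := h2
  obtain ⟨e3, f3⟩ := h3
  have key : (x - y) * (x - z) * (y - z) = 0 := by
    linear_combination (x - z) * f1 - (x - z) * f2 - (x - y) * f1 + (x - y) * f3 +
      v.2 * (r1 - r2) * e1 - v.2 * (r1 - r2) * e3 - v.2 * (r1 - r3) * e1 + v.2 * (r1 - r3) * e2
  rcases mul_eq_zero.mp key with h | h
  · rcases mul_eq_zero.mp h with h | h
    · exact hxy (sub_eq_zero.mp h)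
    · exact hxz (sub_eq_zero.mp h)
  · exact hyz (sub_eq_zero.mp h)

lemma cross_sign {A B S T a b : ℝ} (ha : 0 < a) (hb : 0 < b) (hab : a + b = 1)
    (hAB : A ≠ B) (hST : S ≠ T) (hSA : ¬(S = A ∧ T = B)) (hSB : ¬(S = B ∧ T = A))
    (hcol : Collinear ℝ
      ({(A, A ^ 2), (B, B ^ 2), a • ((S : ℝ), S ^ 2) + b • ((T : ℝ), T ^ 2)} : Set (ℝ × ℝ))) :
    (S - A) * (S - B) * (T - A) * (T - B) < 0 := by
  rw [collinear_iff_exists_forall_eq_smul_vadd] at hcol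
  obtain ⟨p₀, v, hv⟩ := hcol
  obtain ⟨r1, h1⟩ := hv (A, A ^ 2) (by simp)
  obtain ⟨r2, h2⟩ := hv (B, B ^ 2) (by simp)
  obtain ⟨r3, h3⟩ := hv (a • ((S : ℝ), S ^ 2) + b • ((T : ℝ), T ^ 2)) (by simp)
  rw [Prod.ext_iff] at h1 h2 h3
  simp only [Prod.smul_fst, Prod.smul_snd, Prod.fst_add, Prod.snd_add, smul_eq_mul,
    Prod.fst_vadd, Prod.snd_vadd, vadd_eq_add] at h1 h2 h3
  obtain ⟨e1, f1⟩ := h1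
  obtain ⟨e2, f2⟩ := h2
  obtain ⟨e3, f3⟩ := h3
  have key : (B - A) * (a * ((S - A) * (S - B)) + b * ((T - A) * (T - B))) = 0 := by
    linear_combination (-(a * S + b * T - A)) * f2 + (a * S + b * T - A) * f1 +
      (a * S ^ 2 + b * T ^ 2 - A ^ 2) * e2 - (a * S ^ 2 + b * T ^ 2 - A ^ 2) * e1 -
      (r2 - r1) * v.2 * e3 + (r2 - r1) * v.2 * e1 +
      (r2 - r1) * v.1 * f3 - (r2 - r1) * v.1 * f1 + (B - A) * A * B * hab
  have hBA : B - A ≠ 0 := sub_ne_zero.mpr (Ne.symm hAB)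
  have hsum : a * ((S - A) * (S - B)) + b * ((T - A) * (T - B)) = 0 :=
    (mul_eq_zero.mp key).resolve_left hBA
  rcases eq_or_ne ((S - A) * (S - B)) 0 with hz | hnz
  · exfalso
    have hTz : (T - A) * (T - B) = 0 := by
      have h0 : a * ((S - A) * (S - B)) = 0 := by rw [hz, mul_zero]
      have : b * ((T - A) * (T - B)) = 0 := by linarith
      exact (mul_eq_zero.mp this).resolve_left (ne_of_gt hb)
    rcases mul_eq_zero.mp hz with h | h <;> rcases mul_eq_zero.mp hTz with h' | h'
    · exact hST (by linarith [sub_eq_zero.mp h, sub_eq_zero.mp h'])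
    · exact hSA ⟨sub_eq_zero.mp h, sub_eq_zero.mp h'⟩
    · exact hSB ⟨sub_eq_zero.mp h, sub_eq_zero.mp h'⟩
    · exact hST (by linarith [sub_eq_zero.mp h, sub_eq_zero.mp h'])
  · rcases hnz.lt_or_gt with hneg | hpos
    · have hgT : 0 < (T - A) * (T - B) := by
        rcases lt_trichotomy ((T - A) * (T - B)) 0 with h | h | h
        · exfalso; nlinarith
        · exfalso; rw [h, mul_zero, add_zero] at hsum; nlinarith
        · exact h
      nlinarith
    · have hgT : (T - A) * (T - B) < 0 := by
        rcases lt_trichotomy ((T - A) * (T - B)) 0 with h | h | h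
        · exact h
        · exfalso; rw [h, mul_zero, add_zero] at hsum; nlinarith
        · exfalso; nlinarith
      nlinarith

/-- classification of the sorted `sig`-values of an edge of the prism graph -/
lemma edge_sig_aux {n : ℕ} (hn : 4 < n) (hodd : n % 2 = 1) {x y : Fin n × Fin 2}
    (hrel : (x.2 = y.2 ∧ ((x.1 : ℕ) + 1) % n = (y.1 : ℕ)) ∨ (x.1 = y.1 ∧ x.2 = 0 ∧ y.2 = 1)) :
    (max (sig n x) (sig n y) = min (sig n x) (sig n y) + 1) ∨
    (∃ i, i + 1 < n ∧ min (sig n x) (sig n y) = 2 * i ∧ max (sig n x) (sig n y) = 2 * i + 3) ∨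
    (min (sig n x) (sig n y) = 0 ∧ max (sig n x) (sig n y) = 2 * n - 2) ∨
    (min (sig n x) (sig n y) = 1 ∧ max (sig n x) (sig n y) = 2 * n - 1) := by
  have hx1 := x.1.isLt; have hx2 := x.2.isLt; have hy1 := y.1.isLt; have hy2 := y.2.isLt
  unfold sig
  rcases hrel with ⟨hk, hc⟩ | ⟨hi, h0, h1'⟩
  · have hkv : (x.2 : ℕ) = (y.2 : ℕ) := congrArg Fin.val hk
    by_cases hlast : (x.1 : ℕ) + 1 = n
    · rw [hlast, Nat.mod_self] at hc
      have hy0 : (y.1 : ℕ) = 0 := hc.symm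
      rcases (by omega : (x.2 : ℕ) = 0 ∨ (x.2 : ℕ) = 1) with h | h
      · exact Or.inr (Or.inr (Or.inl (by constructor <;> omega)))
      · exact Or.inr (Or.inr (Or.inr (by constructor <;> omega)))
    · rw [Nat.mod_eq_of_lt (by omega)] at hc
      have hy : (y.1 : ℕ) = (x.1 : ℕ) + 1 := hc.symm
      rcases Nat.mod_two_eq_zero_or_one ((x.1 : ℕ) + (x.2 : ℕ)) with hpar | hpar
      · exact Or.inr (Or.inl ⟨(x.1 : ℕ), by omega, by omega, by omega⟩)
      · exact Or.inl (by omega)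
  · have hiv : (x.1 : ℕ) = (y.1 : ℕ) := congrArg Fin.val hi
    have h0v : (x.2 : ℕ) = 0 := by simp [h0]
    have h1v : (y.2 : ℕ) = 1 := by simp [h1']
    exact Or.inl (by omega)

lemma edge_sig {n : ℕ} (hn : 4 < n) (hodd : n % 2 = 1) {x y : Fin n × Fin 2}
    (hadj : (prismGraph n).Adj x y) :
    (max (sig n x) (sig n y) = min (sig n x) (sig n y) + 1) ∨
    (∃ i, i + 1 < n ∧ min (sig n x) (sig n y) = 2 * i ∧ max (sig n x) (sig n y) = 2 * i + 3) ∨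
    (min (sig n x) (sig n y) = 0 ∧ max (sig n x) (sig n y) = 2 * n - 2) ∨
    (min (sig n x) (sig n y) = 1 ∧ max (sig n x) (sig n y) = 2 * n - 1) := by
  rw [prismGraph, SimpleGraph.fromRel_adj] at hadj
  rcases hadj.2 with h | h
  · exact edge_sig_aux hn hodd h
  · have := edge_sig_aux hn hodd (x := y) (y := x) h
    rwa [min_comm (sig n y) (sig n x), max_comm (sig n y) (sig n x)] at this

/-! ### The counting sets -/

def Fmid (n : ℕ) : Finset ((ℕ × ℕ) × (ℕ × ℕ)) :=
  (Finset.range (n - 1)).biUnion (fun i =>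
    ((({2 * i + 1, 2 * i + 2} : Finset ℕ) ×ˢ
        (Finset.range (2 * n) \ {2 * i, 2 * i + 1, 2 * i + 2, 2 * i + 3})).image
      (fun ab => ((2 * i, 2 * i + 3), (min ab.1 ab.2, max ab.1 ab.2)))))

def Fw1 (n : ℕ) : Finset ((ℕ × ℕ) × (ℕ × ℕ)) :=
  (Finset.Ioo 0 (2 * n - 2)).image (fun m => ((0, 2 * n - 2), (m, 2 * n - 1)))

def Fw2 (n : ℕ) : Finset ((ℕ × ℕ) × (ℕ × ℕ)) :=
  (Finset.Ioo 1 (2 * n - 1)).image (fun m => ((1, 2 * n - 1), (0, m)))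

def FF (n : ℕ) : Finset ((ℕ × ℕ) × (ℕ × ℕ)) := Fmid n ∪ Fw1 n ∪ Fw2 n

lemma consec_nonneg (m c : ℕ) : 0 ≤ ((m : ℤ) - c) * ((m : ℤ) + 1 - c) := by
  rcases le_or_gt c m with h | h
  · exact mul_nonneg (by omega) (by omega)
  · exact mul_nonneg_iff.mpr (Or.inr ⟨by omega, by omega⟩)

lemma prod_neg_between {p q c : ℕ} (hpq : p ≤ q) (h : ((p : ℤ) - c) * ((q : ℤ) - c) < 0) :
    p < c ∧ c < q := by
  by_contra hcon
  rcases le_or_gt c p with h1 | h1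
  · exact absurd h (not_lt.mpr (mul_nonneg (by omega) (by omega)))
  · rcases le_or_gt q c with h2 | h2
    · exact absurd h (not_lt.mpr (mul_nonneg_iff.mpr (Or.inr ⟨by omega, by omega⟩)))
    · exact hcon ⟨h1, h2⟩

lemma prod_nonpos_inside {p q c : ℕ} (h1 : p ≤ c) (h2 : c ≤ q) :
    ((p : ℤ) - c) * ((q : ℤ) - c) ≤ 0 :=
  mul_nonpos_iff.mpr (Or.inr ⟨by omega, by omega⟩)

set_option maxHeartbeats 1600000 in
lemma mem_FF {n : ℕ} (hn : 4 < n) {Sn Tn An Bn : ℕ}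
    (hS : Sn < 2 * n) (hT : Tn < 2 * n) (hA : An < 2 * n) (hB : Bn < 2 * n)
    (hclass :
      (max Sn Tn = min Sn Tn + 1) ∨
      (∃ i, i + 1 < n ∧ min Sn Tn = 2 * i ∧ max Sn Tn = 2 * i + 3) ∨
      (min Sn Tn = 0 ∧ max Sn Tn = 2 * n - 2) ∨
      (min Sn Tn = 1 ∧ max Sn Tn = 2 * n - 1))
    (hsign : ((Sn : ℤ) - An) * ((Sn : ℤ) - Bn) * ((Tn : ℤ) - An) * ((Tn : ℤ) - Bn) < 0) :
    ((min Sn Tn, max Sn Tn), (min An Bn, max An Bn)) ∈ FF n := by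
  obtain ⟨S', T', hS'd, hT'd, hsign', hS'lt, hT'lt⟩ :
      ∃ S' T', min Sn Tn = S' ∧ max Sn Tn = T' ∧
        ((S' : ℤ) - An) * ((S' : ℤ) - Bn) * ((T' : ℤ) - An) * ((T' : ℤ) - Bn) < 0 ∧
        S' < 2 * n ∧ T' < 2 * n := by
    rcases le_total Sn Tn with h | h
    · exact ⟨Sn, Tn, min_eq_left h, max_eq_right h, hsign, hS, hT⟩
    · refine ⟨Tn, Sn, min_eq_right h, max_eq_left h, ?_, hT, hS⟩
      have heq : ((Tn : ℤ) - An) * ((Tn : ℤ) - Bn) * ((Sn : ℤ) - An) * ((Sn : ℤ) - Bn) =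
          ((Sn : ℤ) - An) * ((Sn : ℤ) - Bn) * ((Tn : ℤ) - An) * ((Tn : ℤ) - Bn) := by ring
      rw [heq]; exact hsign
  rw [hS'd, hT'd] at hclass ⊢
  have hXY : (((S' : ℤ) - An) * ((T' : ℤ) - An)) * (((S' : ℤ) - Bn) * ((T' : ℤ) - Bn)) < 0 := by
    have heq : (((S' : ℤ) - An) * ((T' : ℤ) - An)) * (((S' : ℤ) - Bn) * ((T' : ℤ) - Bn)) =
        ((S' : ℤ) - An) * ((S' : ℤ) - Bn) * ((T' : ℤ) - An) * ((T' : ℤ) - Bn) := by ring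
    rw [heq]; exact hsign'
  rcases hclass with hc | ⟨i, hi, hminq, hmaxq⟩ | ⟨hminq, hmaxq⟩ | ⟨hminq, hmaxq⟩
  · exfalso
    have hT'c : (T' : ℤ) = (S' : ℤ) + 1 := by exact_mod_cast congrArg (Nat.cast (R := ℤ)) hc
    rw [hT'c] at hXY
    exact absurd hXY (not_lt.mpr (mul_nonneg (consec_nonneg S' An) (consec_nonneg S' Bn)))
  · subst hminq hmaxq
    have hple : (2 * i : ℕ) ≤ 2 * i + 3 := by omega
    rcases lt_or_ge ((((2 * i : ℕ) : ℤ) - An) * (((2 * i + 3 : ℕ) : ℤ) - An)) 0 with hX | hX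
    · obtain ⟨hA1, hA2⟩ := prod_neg_between hple hX
      have hBout : Bn < 2 * i ∨ 2 * i + 3 < Bn := by
        by_contra hcon
        push_neg at hcon
        have := prod_nonpos_inside (c := Bn) (p := 2 * i) (q := 2 * i + 3) hcon.1 hcon.2
        nlinarith
      refine Finset.mem_union_left _ (Finset.mem_union_left _ ?_)
      rw [Fmid, Finset.mem_biUnion]
      refine ⟨i, Finset.mem_range.mpr (by omega), Finset.mem_image.mpr ⟨(An, Bn), ?_, rfl⟩⟩
      rw [Finset.mem_product]
      constructor
      · simp only [Finset.mem_insert, Finset.mem_singleton]; omega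
      · simp only [Finset.mem_sdiff, Finset.mem_range, Finset.mem_insert, Finset.mem_singleton]
        omega
    · have hXpos : 0 < (((2 * i : ℕ) : ℤ) - An) * (((2 * i + 3 : ℕ) : ℤ) - An) := by
        rcases hX.lt_or_eq with h | h
        · exact h
        · exfalso; rw [← h] at hXY; simp at hXY
      have hY : (((2 * i : ℕ) : ℤ) - Bn) * (((2 * i + 3 : ℕ) : ℤ) - Bn) < 0 := by nlinarith
      obtain ⟨hB1, hB2⟩ := prod_neg_between hple hY
      have hAout : An < 2 * i ∨ 2 * i + 3 < An := by
        by_contra hcon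
        push_neg at hcon
        have := prod_nonpos_inside (c := An) (p := 2 * i) (q := 2 * i + 3) hcon.1 hcon.2
        nlinarith
      refine Finset.mem_union_left _ (Finset.mem_union_left _ ?_)
      rw [Fmid, Finset.mem_biUnion]
      refine ⟨i, Finset.mem_range.mpr (by omega),
        Finset.mem_image.mpr ⟨(Bn, An), ?_, by simp [min_comm, max_comm]⟩⟩
      rw [Finset.mem_product]
      constructor
      · simp only [Finset.mem_insert, Finset.mem_singleton]; omega
      · simp only [Finset.mem_sdiff, Finset.mem_range, Finset.mem_insert, Finset.mem_singleton]
        omega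
  · subst hminq
    obtain ⟨L, hL⟩ : ∃ L : ℕ, 2 * n = L + 2 := ⟨2 * n - 2, by omega⟩
    have hL2 : 2 * n - 2 = L := by omega
    have hL1 : 2 * n - 1 = L + 1 := by omega
    have hple : (0 : ℕ) ≤ L := by omega
    rw [hmaxq] at hXY hT'lt ⊢
    rw [hL2] at hXY hT'lt ⊢
    rw [FF, Fw1, Fw2, Fmid, hL2, hL1]
    rcases lt_or_ge ((((0 : ℕ) : ℤ) - An) * (((L : ℕ) : ℤ) - An)) 0 with hX | hX
    · obtain ⟨hA1, hA2⟩ := prod_neg_between hple hX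
      have hBout : Bn = L + 1 := by
        by_contra hcon
        have hcon2 : Bn ≤ L := by omega
        have := prod_nonpos_inside (c := Bn) (p := 0) (q := L) (by omega) hcon2
        nlinarith
      refine Finset.mem_union_left _ (Finset.mem_union_right _ ?_)
      rw [Finset.mem_image]
      refine ⟨An, Finset.mem_Ioo.mpr ⟨by omega, by omega⟩, ?_⟩
      have hmin : min An Bn = An := min_eq_left (by omega)
      have hmax : max An Bn = L + 1 := by rw [hBout]; exact max_eq_right (by omega)
      rw [hmin, hmax]
    · have hXpos : 0 < (((0 : ℕ) : ℤ) - An) * (((L : ℕ) : ℤ) - An) := by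
        rcases hX.lt_or_eq with h | h
        · exact h
        · exfalso; rw [← h] at hXY; simp at hXY
      have hY : (((0 : ℕ) : ℤ) - Bn) * (((L : ℕ) : ℤ) - Bn) < 0 := by nlinarith
      obtain ⟨hB1, hB2⟩ := prod_neg_between hple hY
      have hAout : An = L + 1 := by
        by_contra hcon
        have hcon2 : An ≤ L := by omega
        have := prod_nonpos_inside (c := An) (p := 0) (q := L) (by omega) hcon2
        nlinarith
      refine Finset.mem_union_left _ (Finset.mem_union_right _ ?_)
      rw [Finset.mem_image]
      refine ⟨Bn, Finset.mem_Ioo.mpr ⟨by omega, by omega⟩, ?_⟩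
      have hmin : min An Bn = Bn := min_eq_right (by omega)
      have hmax : max An Bn = L + 1 := by rw [hAout]; exact max_eq_left (by omega)
      rw [hmin, hmax]
  · subst hminq
    obtain ⟨L, hL⟩ : ∃ L : ℕ, 2 * n = L + 2 := ⟨2 * n - 2, by omega⟩
    have hL1 : 2 * n - 1 = L + 1 := by omega
    have hple : (1 : ℕ) ≤ L + 1 := by omega
    rw [hmaxq] at hXY hT'lt ⊢
    rw [hL1] at hXY hT'lt ⊢
    rw [FF, Fw2, hL1]
    rcases lt_or_ge ((((1 : ℕ) : ℤ) - An) * (((L + 1 : ℕ) : ℤ) - An)) 0 with hX | hX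
    · obtain ⟨hA1, hA2⟩ := prod_neg_between hple hX
      have hBout : Bn = 0 := by
        by_contra hcon
        have := prod_nonpos_inside (c := Bn) (p := 1) (q := L + 1) (by omega) (by omega)
        nlinarith
      refine Finset.mem_union_right _ ?_
      rw [Finset.mem_image]
      refine ⟨An, Finset.mem_Ioo.mpr ⟨by omega, by omega⟩, ?_⟩
      have hmin : min An Bn = 0 := by rw [hBout]; exact min_eq_right (by omega)
      have hmax : max An Bn = An := by rw [hBout]; exact max_eq_left (by omega)
      rw [hmin, hmax]
    · have hXpos : 0 < (((1 : ℕ) : ℤ) - An) * (((L + 1 : ℕ) : ℤ) - An) := by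
        rcases hX.lt_or_eq with h | h
        · exact h
        · exfalso; rw [← h] at hXY; simp at hXY
      have hY : (((1 : ℕ) : ℤ) - Bn) * (((L + 1 : ℕ) : ℤ) - Bn) < 0 := by nlinarith
      obtain ⟨hB1, hB2⟩ := prod_neg_between hple hY
      have hAout : An = 0 := by
        by_contra hcon
        have := prod_nonpos_inside (c := An) (p := 1) (q := L + 1) (by omega) (by omega)
        nlinarith
      refine Finset.mem_union_right _ ?_
      rw [Finset.mem_image]
      refine ⟨Bn, Finset.mem_Ioo.mpr ⟨by omega, by omega⟩, ?_⟩
      have hmin : min An Bn = 0 := by rw [hAout]; exact min_eq_left (by omega)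
      have hmax : max An Bn = Bn := by rw [hAout]; exact max_eq_right (by omega)
      rw [hmin, hmax]

lemma FF_card {n : ℕ} (hn : 4 < n) : (FF n).card ≤ 4 * n * (n - 2) + 2 := by
  have h1 : (Fmid n).card ≤ (n - 1) * (2 * (2 * n - 4)) := by
    refine le_trans (Finset.card_biUnion_le) ?_
    have hbound : ∀ i ∈ Finset.range (n - 1),
        ((({2 * i + 1, 2 * i + 2} : Finset ℕ) ×ˢ
          (Finset.range (2 * n) \ {2 * i, 2 * i + 1, 2 * i + 2, 2 * i + 3})).image
          (fun ab => ((2 * i, 2 * i + 3), (min ab.1 ab.2, max ab.1 ab.2)))).card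
          ≤ 2 * (2 * n - 4) := by
      intro i hi
      rw [Finset.mem_range] at hi
      refine le_trans Finset.card_image_le ?_
      rw [Finset.card_product]
      have hc1 : ({2 * i + 1, 2 * i + 2} : Finset ℕ).card ≤ 2 := by
        apply le_trans (Finset.card_insert_le _ _); simp
      have hsub : ({2 * i, 2 * i + 1, 2 * i + 2, 2 * i + 3} : Finset ℕ) ⊆
          Finset.range (2 * n) := by
        intro x hx
        simp only [Finset.mem_insert, Finset.mem_singleton] at hx
        rw [Finset.mem_range]
        omega
      have hc2 : (Finset.range (2 * n) \
          ({2 * i, 2 * i + 1, 2 * i + 2, 2 * i + 3} : Finset ℕ)).card = 2 * n - 4 := by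
        rw [Finset.card_sdiff_of_subset hsub, Finset.card_range]
        have : ({2 * i, 2 * i + 1, 2 * i + 2, 2 * i + 3} : Finset ℕ).card = 4 := by
          rw [Finset.card_insert_of_notMem (by simp), Finset.card_insert_of_notMem (by simp),
            Finset.card_insert_of_notMem (by simp), Finset.card_singleton]
        omega
      rw [hc2]
      exact Nat.mul_le_mul_right _ hc1
    refine le_trans (Finset.sum_le_card_nsmul _ _ _ hbound) ?_
    simp [Finset.card_range, smul_eq_mul]
  have h2 : (Fw1 n).card ≤ 2 * n - 3 := by
    refine le_trans Finset.card_image_le ?_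
    rw [Nat.card_Ioo]; omega
  have h3 : (Fw2 n).card ≤ 2 * n - 3 := by
    refine le_trans Finset.card_image_le ?_
    rw [Nat.card_Ioo]; omega
  have h4 : (FF n).card ≤ (n - 1) * (2 * (2 * n - 4)) + ((2 * n - 3) + (2 * n - 3)) := by
    calc (FF n).card ≤ (Fmid n ∪ Fw1 n).card + (Fw2 n).card := Finset.card_union_le _ _
    _ ≤ ((Fmid n).card + (Fw1 n).card) + (Fw2 n).card :=
        Nat.add_le_add_right (Finset.card_union_le _ _) _
    _ ≤ (n - 1) * (2 * (2 * n - 4)) + ((2 * n - 3) + (2 * n - 3)) := by omega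
  refine le_trans h4 ?_
  obtain ⟨k, rfl⟩ : ∃ k, n = k + 5 := ⟨n - 5, by omega⟩
  have e1 : 2 * (k + 5) - 4 = 2 * k + 6 := by omega
  have e2 : 2 * (k + 5) - 3 = 2 * k + 7 := by omega
  have e3 : k + 5 - 1 = k + 4 := by omega
  have e4 : k + 5 - 2 = k + 3 := by omega
  rw [e1, e2, e3, e4]
  exact le_of_eq (by ring)

/-- the sorted pair of `sig`-values of an unordered pair of vertices -/
def mmf (n : ℕ) : Sym2 (Fin n × Fin 2) → ℕ × ℕ :=
  Sym2.lift ⟨fun a b => (min (sig n a) (sig n b), max (sig n a) (sig n b)), by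
    intro a b; simp [min_comm, max_comm]⟩

lemma mmf_mk {n : ℕ} (a b : Fin n × Fin 2) :
    mmf n s(a, b) = (min (sig n a) (sig n b), max (sig n a) (sig n b)) := rfl

lemma mmf_inj {n : ℕ} : Function.Injective (mmf n) := by
  intro e e'
  refine Sym2.inductionOn₂ e e' (fun a b c d h => ?_)
  rw [mmf_mk, mmf_mk, Prod.mk.injEq] at h
  obtain ⟨h1, h2⟩ := h
  rw [Sym2.eq_iff]
  have : (sig n a = sig n c ∧ sig n b = sig n d) ∨
      (sig n a = sig n d ∧ sig n b = sig n c) := by omega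
  rcases this with ⟨u1, u2⟩ | ⟨u1, u2⟩
  · exact Or.inl ⟨sig_inj u1, sig_inj u2⟩
  · exact Or.inr ⟨sig_inj u1, sig_inj u2⟩

/-- The drawing of the prism graph on the parabola. -/
def prismDrawing (n : ℕ) : OrchardDrawing (prismGraph n) where
  pos := dpos n
  inj := by
    intro a b h
    have h1 : ((sig n a : ℝ)) = ((sig n b : ℝ)) := congrArg Prod.fst h
    exact sig_inj (Nat.cast_injective h1)
  genPos := by
    intro u v w huv huw hvw
    have h1 : (sig n u : ℝ) ≠ (sig n v : ℝ) := by
      intro h; exact huv (sig_inj (Nat.cast_injective h))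
    have h2 : (sig n u : ℝ) ≠ (sig n w : ℝ) := by
      intro h; exact huw (sig_inj (Nat.cast_injective h))
    have h3 : (sig n v : ℝ) ≠ (sig n w : ℝ) := by
      intro h; exact hvw (sig_inj (Nat.cast_injective h))
    exact parab_not_collinear h1 h2 h3

theorem OCN_prism_upper_odd (n : ℕ) (hn : 4 < n) (hno : Odd n) :
    OCN (prismGraph n) ≤ 4 * n * (n - 2) + 2 := by
  have hodd : n % 2 = 1 := Nat.odd_iff.mp hno
  have hD : OCN (prismGraph n) ≤ orchardCrossings (prismDrawing n) :=
    Nat.sInf_le ⟨prismDrawing n, rfl⟩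
  refine hD.trans (le_trans ?_ (FF_card hn))
  have hmem : ∀ q : {q : Sym2 (Fin n × Fin 2) × Sym2 (Fin n × Fin 2) //
      q.1 ∈ (prismGraph n).edgeSet ∧ q.2 ≠ q.1 ∧ ¬ q.2.IsDiag ∧
      ∃ u v s t : Fin n × Fin 2, q.2 = s(u, v) ∧ q.1 = s(s, t) ∧
        ∃ p ∈ openSegment ℝ ((prismDrawing n).pos s) ((prismDrawing n).pos t),
          Collinear ℝ ({(prismDrawing n).pos u, (prismDrawing n).pos v, p} : Set (ℝ × ℝ))},
      (mmf n q.val.1, mmf n q.val.2) ∈ FF n := by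
    rintro ⟨⟨e, pr⟩, hE, hne2, hnd, u, v, s, t, hpr, he, p, hps, hcol⟩
    dsimp only at hE hne2 hnd hpr he ⊢
    subst hpr he
    rw [mmf_mk, mmf_mk]
    have hadj : (prismGraph n).Adj s t := (SimpleGraph.mem_edgeSet _).mp hE
    have hstv : s ≠ t := hadj.ne
    have huvv : u ≠ v := fun h => hnd (Sym2.mk_isDiag_iff.mpr h)
    obtain ⟨a, b, ha, hb, hab, hp⟩ := hps
    rw [← hp] at hcol
    have hABr : (sig n u : ℝ) ≠ (sig n v : ℝ) := by
      intro h; exact huvv (sig_inj (Nat.cast_injective h))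
    have hSTr : (sig n s : ℝ) ≠ (sig n t : ℝ) := by
      intro h; exact hstv (sig_inj (Nat.cast_injective h))
    have h1r : ¬((sig n s : ℝ) = (sig n u : ℝ) ∧ (sig n t : ℝ) = (sig n v : ℝ)) := by
      rintro ⟨c1, c2⟩
      have hsu : s = u := sig_inj (Nat.cast_injective c1)
      have htv : t = v := sig_inj (Nat.cast_injective c2)
      exact hne2 (by rw [hsu, htv])
    have h2r : ¬((sig n s : ℝ) = (sig n v : ℝ) ∧ (sig n t : ℝ) = (sig n u : ℝ)) := by
      rintro ⟨c1, c2⟩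
      have hsv : s = v := sig_inj (Nat.cast_injective c1)
      have htu : t = u := sig_inj (Nat.cast_injective c2)
      apply hne2
      rw [hsv, htu, Sym2.eq_swap]
    have hR : ((sig n s : ℝ) - (sig n u : ℝ)) * ((sig n s : ℝ) - (sig n v : ℝ)) *
        ((sig n t : ℝ) - (sig n u : ℝ)) * ((sig n t : ℝ) - (sig n v : ℝ)) < 0 :=
      cross_sign ha hb hab hABr hSTr h1r h2r hcol
    have hZ : ((sig n s : ℤ) - (sig n u : ℤ)) * ((sig n s : ℤ) - (sig n v : ℤ)) *
        ((sig n t : ℤ) - (sig n u : ℤ)) * ((sig n t : ℤ) - (sig n v : ℤ)) < 0 := by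
      exact_mod_cast hR
    exact mem_FF hn (sig_lt s) (sig_lt t) (sig_lt u) (sig_lt v) (edge_sig hn hodd hadj) hZ
  have hinj : Function.Injective
      (fun q : {q : Sym2 (Fin n × Fin 2) × Sym2 (Fin n × Fin 2) //
        q.1 ∈ (prismGraph n).edgeSet ∧ q.2 ≠ q.1 ∧ ¬ q.2.IsDiag ∧
        ∃ u v s t : Fin n × Fin 2, q.2 = s(u, v) ∧ q.1 = s(s, t) ∧
          ∃ p ∈ openSegment ℝ ((prismDrawing n).pos s) ((prismDrawing n).pos t),
            Collinear ℝ ({(prismDrawing n).pos u, (prismDrawing n).pos v, p} : Set (ℝ × ℝ))} =>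
        (⟨(mmf n q.val.1, mmf n q.val.2), hmem q⟩ : {x // x ∈ FF n})) := by
    intro q q' h
    have h' : (mmf n q.val.1, mmf n q.val.2) = (mmf n q'.val.1, mmf n q'.val.2) :=
      congrArg Subtype.val h
    rw [Prod.mk.injEq] at h'
    exact Subtype.ext (Prod.ext_iff.mpr ⟨mmf_inj h'.1, mmf_inj h'.2⟩)
  calc orchardCrossings (prismDrawing n)
      ≤ Nat.card {x // x ∈ FF n} := Nat.card_le_card_of_injective _ hinj
    _ = (FF n).card := Nat.card_eq_finsetCard _
end
end

section
/- Let n ≥ 3, let q₁, …, q_n be points of the plane ℝ² in convex position, labeled in cyclic order around their convex hull, and let p be a point outside the convex hull of {q₁, …, q_n} such that the n+1 points q₁, …, q_n, p are in general position (no three collinear). Then the number of pairs (i, j) with 1 ≤ i, j ≤ n such that the straight line through p and q_j intersects the open segment joining q_i and q_{i+1} (indices taken mod n) equals exactly n - 2. -/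
noncomputable section

/-- The cyclic successor of an index in `Fin n`. -/
def nextFin {n : ℕ} (i : Fin n) : Fin n := ⟨((i : ℕ) + 1) % n, Nat.mod_lt _ i.pos⟩

/-!
A line strictly separates `p` from the polygon, so seen from `p` the vertices are linearly
ordered by a slope `t` with `sign (t i - t j) = sign (det2 (q j - p) (q i - p))`, and the line
`p q j` meets the open edge `q i q (i+1)` exactly when `t j` lies strictly between `t i` and
`t (i+1)`. Convexity enters through the fact that the diagonals of four vertices taken in cyclic
order cross; hence no line splits the vertices in an alternating pattern, every set
`{i | t j < t i}` is a cyclic interval, and the level `t j` separates the ends of exactly two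
edges (none when `t j` is maximal). Counting pairs (edge, level) with the level in the half-open
interval between the end values of the edge, once per level and once per edge, gives
`2 (n - 1) = (number of crossings) + n`.
-/

section Cyclic

variable {n : ℕ}

lemma val_nextFin (i : Fin n) :
    (nextFin i : ℕ) = if (i : ℕ) + 1 = n then 0 else (i : ℕ) + 1 := by
  have := i.isLt
  split_ifs with h
  · simp [nextFin, h]
  · simp [nextFin, Nat.mod_eq_of_lt (by omega : (i : ℕ) + 1 < n)]

lemma nextFin_eq_add_one [NeZero n] (i : Fin n) : nextFin i = i + 1 := by
  ext
  simp [nextFin, Fin.val_add]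

lemma nextFin_eq_of_val_add_one {i j : Fin n} (h : (i : ℕ) + 1 = j) : nextFin i = j :=
  Fin.ext <| by rw [val_nextFin, if_neg (h ▸ j.isLt.ne), h]

lemma nextFin_ne_self (hn : 2 ≤ n) (i : Fin n) : nextFin i ≠ i := by
  intro h
  have := congrArg Fin.val h
  rw [val_nextFin] at this
  split_ifs at this <;> omega

lemma nextFin_nextFin_ne_self (hn : 3 ≤ n) (i : Fin n) : nextFin (nextFin i) ≠ i := by
  intro h
  have := congrArg Fin.val h
  rw [val_nextFin, val_nextFin] at this
  have := i.isLt
  split_ifs at * <;> omega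

open Fin.NatCast in
lemma forall_of_nextFin_closed {P : Fin n → Prop} (hP : ∀ i, P i → P (nextFin i)) {i₀ : Fin n}
    (h₀ : P i₀) (j : Fin n) : P j := by
  have : NeZero n := ⟨i₀.pos.ne'⟩
  have key : ∀ k : ℕ, P (i₀ + (k : Fin n)) := by
    intro k
    induction k with
    | zero => simpa using h₀
    | succ k ih => simpa [← add_assoc, nextFin_eq_add_one] using hP _ ih
  simpa using key (j - i₀).val

end Cyclic

section CyclicCounting

open Finset

variable {n : ℕ} {β : Type*}

def NonAlternating (a : Fin n → β) : Prop :=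
  ∀ i₁ i₂ i₃ i₄ : Fin n, i₁ < i₂ → i₂ < i₃ → i₃ < i₄ → a i₁ = a i₃ → a i₂ = a i₄ → a i₁ = a i₂

lemma NonAlternating.comp {γ : Type*} {a : Fin n → β} (ha : NonAlternating a) {f : β → γ}
    (hf : Function.Injective f) : NonAlternating (f ∘ a) :=
  fun i₁ i₂ i₃ i₄ h₁₂ h₂₃ h₃₄ h₁₃ h₂₄ =>
    congrArg f (ha i₁ i₂ i₃ i₄ h₁₂ h₂₃ h₃₄ (hf h₁₃) (hf h₂₄))

variable {a : Fin n → Bool}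

lemma exists_descent {i j : Fin n} (hi : a i = true) (hj : a j = false) :
    ∃ k, a k = true ∧ a (nextFin k) = false := by
  by_contra! h
  simpa [hj] using forall_of_nextFin_closed (P := (a · = true)) (by simpa using h) hi j

lemma NonAlternating.descent_unique (ha : NonAlternating a) {i i' : Fin n}
    (hi : a i = true ∧ a (nextFin i) = false) (hi' : a i' = true ∧ a (nextFin i') = false) :
    i = i' := by
  have key : ∀ {i i' : Fin n}, i < i' → a i = true ∧ a (nextFin i) = false →
      a i' = true ∧ a (nextFin i') = false → False := by
    intro i i' hlt hi hi'
    have hne : nextFin i ≠ i' := fun h => by simp_all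
    have hne' : nextFin i' ≠ i := fun h => by simp_all
    have hv := val_nextFin i
    have hv' := val_nextFin i'
    rw [Fin.lt_def] at hlt
    rw [Ne, Fin.ext_iff] at hne hne'
    have := i'.isLt
    split_ifs at hv hv' with h h'
    · omega
    · omega
    · -- the descent at `i'` wraps around to `0`, which then precedes `i`
      have := ha (nextFin i') i (nextFin i) i' (by rw [Fin.lt_def]; omega)
        (by rw [Fin.lt_def]; omega) (by rw [Fin.lt_def]; omega) (by simp_all) (by simp_all)
      simp_all
    · have := ha i (nextFin i) i' (nextFin i') (by rw [Fin.lt_def]; omega)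
        (by rw [Fin.lt_def]; omega) (by rw [Fin.lt_def]; omega) (by simp_all) (by simp_all)
      simp_all
  rcases lt_trichotomy i i' with h | h | h
  · exact (key h hi hi').elim
  · exact h
  · exact (key h hi' hi).elim

lemma NonAlternating.card_descents (ha : NonAlternating a) {i j : Fin n} (hi : a i = true)
    (hj : a j = false) : #{k | a k = true ∧ a (nextFin k) = false} = 1 := by
  obtain ⟨k, hk⟩ := exists_descent hi hj
  exact card_eq_one.2 ⟨k, eq_singleton_iff_unique_mem.2
    ⟨by simpa using hk, fun k' hk' => ha.descent_unique (by simpa using hk') hk⟩⟩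

lemma NonAlternating.card_changes (ha : NonAlternating a) {i j : Fin n} (hi : a i = true)
    (hj : a j = false) : #{k | a k ≠ a (nextFin k)} = 2 := by
  have hsplit : filter (fun k => a k ≠ a (nextFin k)) univ =
      filter (fun k => a k = true ∧ a (nextFin k) = false) univ ∪
        filter (fun k => (not ∘ a) k = true ∧ (not ∘ a) (nextFin k) = false) univ := by
    ext k
    simp only [mem_filter, mem_union, mem_univ, true_and, Function.comp_apply]
    cases a k <;> cases a (nextFin k) <;> decide
  rw [hsplit, card_union_of_disjoint, ha.card_descents hi hj,
    (ha.comp Bool.not_injective).card_descents (i := j) (j := i) (by simpa) (by simpa)]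
  exact disjoint_filter.2 fun k _ hk hk' => by simp_all

lemma ite_decide_lt_ne_decide_lt {α : Type*} [CommRing α] [LinearOrder α] [IsStrictOrderedRing α]
    {x y : α} (hxy : x ≠ y) (z : α) :
    (if decide (z < x) ≠ decide (z < y) then 1 else 0 : ℕ) =
      (if (x - z) * (y - z) < 0 then 1 else 0) + if z = min x y then 1 else 0 := by
  have hmul : (x - z) * (y - z) < 0 ↔ (z < x ∧ y < z) ∨ (x < z ∧ z < y) := by
    rw [mul_neg_iff, sub_pos, sub_neg, sub_neg, sub_pos]
  simp only [hmul]
  split_ifs <;> grind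

lemma sum_ite_decide_lt_ne_decide_lt {α ι : Type*} [CommRing α] [LinearOrder α]
    [IsStrictOrderedRing α] [Fintype ι] {t : ι → α} (ht : Function.Injective t) {x y : ι}
    (hxy : t x ≠ t y) :
    ∑ j, (if decide (t j < t x) ≠ decide (t j < t y) then 1 else 0) =
      (∑ j, if (t x - t j) * (t y - t j) < 0 then 1 else 0) + 1 := by
  classical
  have hmin : ∑ j, (if t j = min (t x) (t y) then 1 else 0) = 1 := by
    rcases min_choice (t x) (t y) with h | h <;> simp [h, ht.eq_iff]
  simp only [ite_decide_lt_ne_decide_lt hxy, sum_add_distrib, hmin]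

theorem card_strictly_between_consecutive {α : Type*} [CommRing α] [LinearOrder α]
    [IsStrictOrderedRing α] {n : ℕ} (hn : 2 ≤ n) {t : Fin n → α}
    (ht : Function.Injective t) (hlev : ∀ j, NonAlternating fun i => decide (t j < t i)) :
    Nat.card {ij : Fin n × Fin n // (t ij.1 - t ij.2) * (t (nextFin ij.1) - t ij.2) < 0} =
      n - 2 := by
  have : Nonempty (Fin n) := ⟨⟨0, by omega⟩⟩
  obtain ⟨m, hm⟩ := Finite.exists_max t
  have hlevel : ∀ j, ∑ i, (if decide (t j < t i) ≠ decide (t j < t (nextFin i)) then 1 else 0) =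
      if j = m then 0 else 2 := by
    intro j
    rw [← card_filter]
    split_ifs with h
    · rw [card_eq_zero, filter_eq_empty_iff]
      intro i _
      simp [h, (hm i).not_gt, (hm (nextFin i)).not_gt]
    · exact (hlev j).card_changes (i := m) (j := j) (by simpa using (hm j).lt_of_ne (ht.ne h))
        (by simp)
  have hcount : (∑ i, ∑ j, if (t i - t j) * (t (nextFin i) - t j) < 0 then 1 else 0) + n =
      2 * (n - 1) := calc
    _ = ∑ i, ∑ j, (if decide (t j < t i) ≠ decide (t j < t (nextFin i)) then 1 else 0) := by
      simp only [sum_ite_decide_lt_ne_decide_lt ht (ht.ne (nextFin_ne_self hn _).symm),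
        sum_add_distrib, sum_const, card_univ, Fintype.card_fin, smul_eq_mul, mul_one]
    _ = ∑ j, ∑ i, (if decide (t j < t i) ≠ decide (t j < t (nextFin i)) then 1 else 0) :=
      sum_comm
    _ = 2 * (n - 1) := by
      simp only [hlevel]
      rw [sum_ite, sum_const_zero, zero_add, sum_const, filter_ne', card_erase_of_mem (mem_univ m),
        card_univ, Fintype.card_fin, smul_eq_mul, mul_comm]
  rw [Nat.card_eq_fintype_card, Fintype.card_subtype, card_filter]
  simp only [Fintype.sum_prod_type]
  omega

end CyclicCounting

def det2 (u v : ℝ × ℝ) : ℝ := u.1 * v.2 - u.2 * v.1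

def ori (a b c : ℝ × ℝ) : ℝ := det2 (b - a) (c - a)

lemma det2_plucker (a b c d : ℝ × ℝ) :
    det2 a c * det2 b d - det2 a d * det2 b c = det2 a b * det2 c d := by
  simp only [det2]; ring

lemma ori_rotate (a b c : ℝ × ℝ) : ori a b c = ori b c a := by
  simp only [ori, det2, Prod.fst_sub, Prod.snd_sub]; ring

lemma det2_smul_add_smul_sub (u p x y : ℝ × ℝ) {a b : ℝ} (hab : a + b = 1) :
    det2 u (a • x + b • y - p) = a * det2 u (x - p) + b * det2 u (y - p) := by
  simp only [det2, Prod.fst_sub, Prod.snd_sub, Prod.fst_add, Prod.snd_add, Prod.smul_fst,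
    Prod.smul_snd, smul_eq_mul]
  linear_combination (u.1 * p.2 - u.2 * p.1) * hab

lemma LinearMap.apply_eq_det2 (f : (ℝ × ℝ) →ₗ[ℝ] ℝ) (v : ℝ × ℝ) :
    f v = det2 (f (0, 1), -f (1, 0)) v := by
  have hv : v = v.1 • ((1 : ℝ), (0 : ℝ)) + v.2 • ((0 : ℝ), (1 : ℝ)) := by ext <;> simp
  conv_lhs => rw [hv]
  simp only [map_add, map_smul, smul_eq_mul, det2]
  ring

lemma det2_pos_trans {σ : ℝ} {d u v w : ℝ × ℝ} (hu : 0 ≤ σ * det2 d u) (hv : 0 < σ * det2 d v)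
    (hw : 0 < σ * det2 d w) (huv : 0 < σ * det2 u v) (hvw : 0 < σ * det2 v w) :
    0 < σ * det2 u w := by
  have key : (σ * det2 d v) * (σ * det2 u w) =
      (σ * det2 d w) * (σ * det2 u v) + (σ * det2 d u) * (σ * det2 v w) := by
    linear_combination σ ^ 2 * det2_plucker d u v w
  exact pos_of_mul_pos_right (key ▸ by positivity) hv.le

lemma exists_sign_sub_eq_sign_det2 {ι : Type*} {v : ι → ℝ × ℝ} {d r : ℝ × ℝ}
    (hr : 0 < det2 d r) (hv : ∀ i, 0 < det2 d (v i)) :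
    ∃ t : ι → ℝ, ∀ i j, SignType.sign (t i - t j) = SignType.sign (det2 (v j) (v i)) := by
  -- `t i` reads, through `det2 r`, the central projection of `v i` onto the line `det2 d · = 1`
  refine ⟨fun i => det2 r (v i) / det2 d (v i), fun i j => ?_⟩
  have hi := (hv i).ne'
  have hj := (hv j).ne'
  have : det2 r (v i) / det2 d (v i) - det2 r (v j) / det2 d (v j) =
      det2 d r / (det2 d (v j) * det2 d (v i)) * det2 (v j) (v i) := by
    field_simp
    linear_combination det2_plucker d r (v j) (v i)
  rw [this, sign_mul, sign_pos (div_pos hr (mul_pos (hv j) (hv i))), one_mul]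

lemma exists_det2_pos_of_notMem_convexHull {s : Set (ℝ × ℝ)} (hs : s.Finite) {p : ℝ × ℝ}
    (hp : p ∉ convexHull ℝ s) : ∃ d, ∀ x ∈ s, 0 < det2 d (x - p) := by
  obtain ⟨f, u, hfp, hfs⟩ := geometric_hahn_banach_point_closed (convex_convexHull ℝ s)
    (hs.isCompact_convexHull ℝ).isClosed hp
  refine ⟨(f (0, 1), -f (1, 0)), fun x hx => ?_⟩
  have := hfs x (subset_convexHull ℝ s hx)
  rw [← f.coe_coe, ← LinearMap.apply_eq_det2, map_sub]
  simp only [ContinuousLinearMap.coe_coe]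
  linarith

lemma exists_eq_smul_of_det2_eq_zero {u w : ℝ × ℝ} (hu : u ≠ 0) (h : det2 u w = 0) :
    ∃ r : ℝ, w = r • u := by
  have hnorm : u.1 ^ 2 + u.2 ^ 2 ≠ 0 := by
    contrapose! hu
    ext <;> simp <;> nlinarith [sq_nonneg u.1, sq_nonneg u.2]
  refine ⟨(u.1 * w.1 + u.2 * w.2) / (u.1 ^ 2 + u.2 ^ 2), ?_⟩
  simp only [det2] at h
  ext <;> simp only [Prod.smul_fst, Prod.smul_snd, smul_eq_mul] <;> field_simp
  · linear_combination (-u.2) * h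
  · linear_combination u.1 * h

lemma AffineMap.exists_eq_mul_ori (φ : (ℝ × ℝ) →ᵃ[ℝ] ℝ) {x y : ℝ × ℝ} (hxy : x ≠ y)
    (hx : φ x = 0) (hy : φ y = 0) : ∃ k : ℝ, ∀ z, φ z = k * ori x y z := by
  set e : ℝ × ℝ := (φ.linear (0, 1), -φ.linear (1, 0))
  have hφ : ∀ z, φ z = det2 e (z - x) := fun z => by
    rw [← LinearMap.apply_eq_det2, ← vsub_eq_sub, φ.linearMap_vsub, hx, vsub_eq_sub, sub_zero]
  obtain ⟨k, hk⟩ := exists_eq_smul_of_det2_eq_zero (sub_ne_zero.2 hxy.symm)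
    (by rw [← neg_eq_zero, ← hy, hφ]; simp only [det2]; ring : det2 (y - x) e = 0)
  refine ⟨k, fun z => ?_⟩
  rw [hφ, hk, ori]
  simp only [det2, Prod.smul_fst, Prod.smul_snd, smul_eq_mul]
  ring

lemma zero_mem_openSegment_iff {s t : ℝ} :
    (0 : ℝ) ∈ openSegment ℝ s t ↔ s * t < 0 ∨ s = 0 ∧ t = 0 := by
  rcases eq_or_ne s t with rfl | hst
  · simp [openSegment_same, eq_comm, mul_self_nonneg]
  · rw [openSegment_eq_Ioo' hst, Set.mem_Ioo, mul_neg_iff]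
    grind

lemma collinear_iff_det2_eq_zero {p x y : ℝ × ℝ} (hpx : p ≠ x) :
    Collinear ℝ {p, x, y} ↔ det2 (x - p) (y - p) = 0 := by
  rw [collinear_iff_of_mem (Set.mem_insert p _)]
  constructor
  · rintro ⟨v, hv⟩
    obtain ⟨r, hr⟩ := hv x (by simp)
    obtain ⟨s, hs⟩ := hv y (by simp)
    rw [hr, hs]
    simp only [vadd_eq_add, add_sub_cancel_right, det2, Prod.smul_fst, Prod.smul_snd, smul_eq_mul]
    ring
  · intro h
    obtain ⟨r, hr⟩ := exists_eq_smul_of_det2_eq_zero (sub_ne_zero.2 hpx.symm) h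
    refine ⟨x - p, ?_⟩
    simp only [Set.mem_insert_iff, Set.mem_singleton_iff, forall_eq_or_imp, forall_eq, vadd_eq_add]
    exact ⟨⟨0, by simp⟩, ⟨1, by simp⟩, ⟨r, by rw [← hr, sub_add_cancel]⟩⟩

lemma exists_mem_openSegment_collinear_iff {p x a b : ℝ × ℝ} (hpx : p ≠ x) :
    (∃ y ∈ openSegment ℝ a b, Collinear ℝ {p, x, y}) ↔
      (0 : ℝ) ∈ openSegment ℝ (det2 (x - p) (a - p)) (det2 (x - p) (b - p)) := by
  simp only [collinear_iff_det2_eq_zero hpx, openSegment, Set.mem_ofPred_eq, smul_eq_mul]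
  constructor
  · rintro ⟨_, ⟨s, t, hs, ht, hst, rfl⟩, hy⟩
    exact ⟨s, t, hs, ht, hst, by rw [← det2_smul_add_smul_sub _ _ _ _ hst, hy]⟩
  · rintro ⟨s, t, hs, ht, hst, h⟩
    exact ⟨_, ⟨s, t, hs, ht, hst, rfl⟩, by rw [det2_smul_add_smul_sub _ _ _ _ hst, h]⟩

lemma pos_mul_of_pos_mul_of_pos_mul {a b c : ℝ} (hab : 0 < a * b) (hbc : 0 < b * c) :
    0 < a * c :=
  pos_of_mul_pos_right (by nlinarith [mul_pos hab hbc]) (sq_nonneg b)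

lemma div_pos_of_mul_pos_of_mul_pos {σ x y : ℝ} (hx : 0 < σ * x) (hy : 0 < σ * y) : 0 < x / y := by
  have hσ : σ ≠ 0 := by rintro rfl; simp at hx
  rw [← mul_div_mul_left x y hσ]
  exact div_pos hx hy

lemma openSegment_inter_openSegment_nonempty {σ : ℝ} {A B C D : ℝ × ℝ}
    (hABC : 0 < σ * ori A B C) (hABD : 0 < σ * ori A B D) (hACD : 0 < σ * ori A C D)
    (hBCD : 0 < σ * ori B C D) : (openSegment ℝ A C ∩ openSegment ℝ B D).Nonempty := by
  set N := ori B C D + ori A B D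
  have hσN : 0 < σ * N := by rw [mul_add]; exact add_pos hBCD hABD
  have hN : N ≠ 0 := by rintro h; simp [h] at hσN
  have hsum : ori A C D + ori A B C = N := by
    simp only [N, ori, det2, Prod.fst_sub, Prod.snd_sub]; ring
  have hX : (ori B C D / N) • A + (ori A B D / N) • C =
      (ori A C D / N) • B + (ori A B C / N) • D := by
    ext <;> simp only [N, ori, det2, Prod.fst_sub, Prod.snd_sub, Prod.fst_add, Prod.snd_add,
      Prod.smul_fst, Prod.smul_snd, smul_eq_mul] <;> field_simp <;> ring
  exact ⟨_, ⟨_, _, div_pos_of_mul_pos_of_mul_pos hBCD hσN, div_pos_of_mul_pos_of_mul_pos hABD hσN,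
    by rw [← add_div, div_self hN], rfl⟩, ⟨_, _, div_pos_of_mul_pos_of_mul_pos hACD hσN,
    div_pos_of_mul_pos_of_mul_pos hABC hσN, by rw [← add_div, hsum, div_self hN], hX.symm⟩⟩

section ConvexCycle

variable {n : ℕ} {q : Fin n → ℝ × ℝ}

def IsConvexCycle (q : Fin n → ℝ × ℝ) : Prop :=
  ∀ i, ∃ φ : (ℝ × ℝ) →ᵃ[ℝ] ℝ,
    φ (q i) = 0 ∧ φ (q (nextFin i)) = 0 ∧ ∀ j, j ≠ i → j ≠ nextFin i → 0 < φ (q j)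

lemma IsConvexCycle.exists_orientation (hq : IsConvexCycle q) (hinj : Function.Injective q)
    (hn : 3 ≤ n) :
    ∃ σ : ℝ, ∀ i m, m ≠ i → m ≠ nextFin i → 0 < σ * ori (q i) (q (nextFin i)) (q m) := by
  choose φ hφi hφn hφpos using hq
  choose k hk using fun i =>
    (φ i).exists_eq_mul_ori (hinj.ne (nextFin_ne_self (by omega) i).symm) (hφi i) (hφn i)
  have hedge : ∀ i m, m ≠ i → m ≠ nextFin i → 0 < k i * ori (q i) (q (nextFin i)) (q m) :=
    fun i m h₁ h₂ => hk i _ ▸ hφpos i m h₁ h₂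
  -- consecutive edges both see the triangle `q i, q (i + 1), q (i + 2)`
  have hcons : ∀ i, 0 < k i * k (nextFin i) := by
    intro i
    have h₁ := hedge i _ (nextFin_nextFin_ne_self hn i) (nextFin_ne_self (by omega) _)
    have h₂ := hedge (nextFin i) i (nextFin_ne_self (by omega) i).symm
      (nextFin_nextFin_ne_self hn i).symm
    rw [← ori_rotate] at h₂
    exact pos_of_mul_pos_left (by nlinarith [mul_pos h₁ h₂]) (sq_nonneg (ori (q i) _ _))
  set i₀ : Fin n := ⟨0, by omega⟩
  have h₀ : 0 < k i₀ * k i₀ := mul_self_pos.2 fun h => by simpa [h] using hcons i₀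
  have hsign : ∀ i, 0 < k i₀ * k i :=
    forall_of_nextFin_closed (fun i hi => pos_mul_of_pos_mul_of_pos_mul hi (hcons i)) h₀
  exact ⟨k i₀, fun i m h₁ h₂ => pos_mul_of_pos_mul_of_pos_mul (hsign i) (hedge i m h₁ h₂)⟩

lemma ori_pos_of_lt {σ : ℝ}
    (hσ : ∀ i m, m ≠ i → m ≠ nextFin i → 0 < σ * ori (q i) (q (nextFin i)) (q m))
    {a b c : Fin n} (hab : a < b) (hbc : b < c) : 0 < σ * ori (q a) (q b) (q c) := by
  have hside : ∀ m : Fin n, (a : ℕ) + 1 < m → 0 < σ * ori (q a) (q (nextFin a)) (q m) :=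
    fun m hm => hσ a m (Fin.ne_of_val_ne (by omega)) fun h => by
      rw [h, val_nextFin, if_neg (by omega)] at hm; omega
  have hb : 0 ≤ σ * ori (q a) (q (nextFin a)) (q b) := by
    rcases eq_or_ne b (nextFin a) with rfl | hb
    · simp [ori, det2, mul_comm]
    · exact (hσ a b hab.ne' hb).le
  rw [Fin.lt_def] at hab
  suffices H : ∀ k, (b : ℕ) < k → ∀ hk : k < n, 0 < σ * ori (q a) (q b) (q ⟨k, hk⟩) from
    H c hbc c.isLt
  -- every `q m - q a` with `a + 1 < m` lies in the open half-plane of the edge at `a`, where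
  -- `det2_pos_trans` chains the turns `(a, k, k + 1)`
  intro k hbk
  induction k, hbk using Nat.le_induction with
  | base =>
    intro hk
    have hnb := nextFin_eq_of_val_add_one (i := b) (j := ⟨b + 1, hk⟩) rfl
    rw [ori_rotate, ← hnb]
    exact hσ b a (Fin.ne_of_val_ne (by omega))
      (by rw [hnb]; exact Fin.ne_of_val_ne (by simp; omega))
  | succ k hbk ih =>
    intro hk
    have hnk := nextFin_eq_of_val_add_one (i := ⟨k, by omega⟩) (j := ⟨k + 1, hk⟩) rfl
    have hturn : 0 < σ * ori (q a) (q ⟨k, by omega⟩) (q ⟨k + 1, hk⟩) := by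
      rw [ori_rotate, ← hnk]
      exact hσ _ a (Fin.ne_of_val_ne (by simp; omega))
        (by rw [hnk]; exact Fin.ne_of_val_ne (by simp; omega))
    exact det2_pos_trans hb (hside _ (by simp; omega)) (hside _ (by simp; omega)) (ih (by omega))
      hturn

lemma IsConvexCycle.nonAlternating_comp (hq : IsConvexCycle q) (hinj : Function.Injective q)
    (hn : 3 ≤ n) {β : Type*} {g : ℝ × ℝ → β} (hg : ∀ b, Convex ℝ (g ⁻¹' {b})) :
    NonAlternating (g ∘ q) := by
  obtain ⟨σ, hσ⟩ := hq.exists_orientation hinj hn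
  intro i₁ i₂ i₃ i₄ h₁₂ h₂₃ h₃₄ h₁₃ h₂₄
  obtain ⟨x, hx₁₃, hx₂₄⟩ := openSegment_inter_openSegment_nonempty (ori_pos_of_lt hσ h₁₂ h₂₃)
    (ori_pos_of_lt hσ h₁₂ (h₂₃.trans h₃₄)) (ori_pos_of_lt hσ (h₁₂.trans h₂₃) h₃₄)
    (ori_pos_of_lt hσ h₂₃ h₃₄)
  have e₁ : g x = g (q i₁) := (hg _).openSegment_subset rfl h₁₃.symm hx₁₃
  have e₂ : g x = g (q i₂) := (hg _).openSegment_subset rfl h₂₄.symm hx₂₄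
  exact e₁.symm.trans e₂

end ConvexCycle

lemma convex_preimage_decide_det2_pos (u p : ℝ × ℝ) (b : Bool) :
    Convex ℝ ((fun x => decide (0 < det2 u (x - p))) ⁻¹' {b}) := by
  rw [convex_iff_forall_pos]
  intro x hx y hy s t hs ht hst
  simp only [Set.mem_preimage, Set.mem_singleton_iff, det2_smul_add_smul_sub _ _ _ _ hst] at *
  cases b <;> simp only [decide_eq_false_iff_not, decide_eq_true_eq, not_lt] at * <;> nlinarith

/-- Observation 2.1(2): a point `p` outside a convex polygon `q₁ … qₙ` (vertices in
convex position, labeled in cyclic order: for each `i` the segment `qᵢ qᵢ₊₁` lies on a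
supporting affine line with all other vertices strictly on one side), with the `n + 1`
points in general position, determines exactly `n - 2` Orchard crossings on the polygon:
the number of pairs `(i, j)` such that the line through `p` and `q j` meets the open
segment from `q i` to `q (i+1)` equals `n - 2`. -/
theorem crossings_point_outside_convex_cycle (n : ℕ) (hn : 3 ≤ n)
    (q : Fin n → ℝ × ℝ) (p : ℝ × ℝ)
    (hq_inj : Function.Injective q)
    (hcyc : ∀ i : Fin n, ∃ φ : (ℝ × ℝ) →ᵃ[ℝ] ℝ,
      φ (q i) = 0 ∧ φ (q (nextFin i)) = 0 ∧
      ∀ j : Fin n, j ≠ i → j ≠ nextFin i → 0 < φ (q j))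
    (hp : p ∉ convexHull ℝ (Set.range q))
    (hgen : ∀ a b c : ℝ × ℝ, a ∈ insert p (Set.range q) → b ∈ insert p (Set.range q) →
      c ∈ insert p (Set.range q) → a ≠ b → a ≠ c → b ≠ c →
      ¬ Collinear ℝ ({a, b, c} : Set (ℝ × ℝ))) :
    Nat.card {ij : Fin n × Fin n //
      ∃ pt ∈ openSegment ℝ (q ij.1) (q (nextFin ij.1)),
        Collinear ℝ ({p, q ij.2, pt} : Set (ℝ × ℝ))} = n - 2 := by
  have hpq : ∀ i, p ≠ q i := fun i h => hp (h ▸ subset_convexHull ℝ _ (Set.mem_range_self i))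
  have hdet : ∀ i j, det2 (q j - p) (q i - p) = 0 → i = j := fun i j h => by_contra fun hij =>
    hgen p (q j) (q i) (Set.mem_insert _ _) (Set.mem_insert_of_mem _ ⟨j, rfl⟩)
      (Set.mem_insert_of_mem _ ⟨i, rfl⟩) (hpq j) (hpq i) (hq_inj.ne (Ne.symm hij))
      ((collinear_iff_det2_eq_zero (hpq j)).2 h)
  obtain ⟨d, hd⟩ := exists_det2_pos_of_notMem_convexHull (Set.finite_range q) hp
  obtain ⟨t, ht⟩ := exists_sign_sub_eq_sign_det2 (v := fun i => q i - p)
    (hd _ ⟨⟨0, by omega⟩, rfl⟩) fun i => hd _ ⟨i, rfl⟩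
  have htinj : Function.Injective t := fun i j h =>
    hdet i j (sign_eq_zero_iff.1 (by rw [← ht, h, sub_self, sign_zero]))
  have hcross : ∀ ij : Fin n × Fin n,
      (∃ pt ∈ openSegment ℝ (q ij.1) (q (nextFin ij.1)), Collinear ℝ {p, q ij.2, pt}) ↔
        (t ij.1 - t ij.2) * (t (nextFin ij.1) - t ij.2) < 0 := by
    rintro ⟨i, j⟩
    rw [exists_mem_openSegment_collinear_iff (hpq j), zero_mem_openSegment_iff,
      ← sign_eq_neg_one_iff, sign_mul, ← ht, ← ht, ← sign_mul, sign_eq_neg_one_iff, or_iff_left]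
    exact fun ⟨h₁, h₂⟩ => nextFin_ne_self (by omega) i ((hdet _ _ h₂).trans (hdet _ _ h₁).symm)
  have hlevel : ∀ j, NonAlternating fun i => decide (t j < t i) := fun j => by
    have hlt : ∀ i, t j < t i ↔ 0 < det2 (q j - p) (q i - p) := fun i => by
      rw [← sub_pos, ← sign_eq_one_iff, ht, sign_eq_one_iff]
    simp_rw [hlt]
    exact IsConvexCycle.nonAlternating_comp hcyc hq_inj hn (convex_preimage_decide_det2_pos _ p)
  rw [Nat.card_congr (Equiv.subtypeEquivRight hcross)]
  exact card_strictly_between_consecutive (by omega) htinj hlevel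
end
end
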